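/- arXiv:0903.4237 — 6 statements merged into one kernel-verified Lean document; each statement's English description precedes it below -/
import Mathlib

section
/- Let k be a positive integer and q a prime power. If S is a multiset of integers of size (q^k − 1)/(q − 1) with split difference δ_q(S) > −q^{k−1}, then S is q-projection-forcing. -/
open Matrix

noncomputable section

instance instFiniteProjectivization (K V : Type*) [DivisionRing K] [AddCommGroup V] [Module K V]
    [Finite V] : Finite (Projectivization K V) :=
  Quotient.finite _

noncomputable instance instFintypeProjectivization (K V : Type*) [DivisionRing K] [AddCommGroup V]
    [Module K V] [Finite V] : Fintype (Projectivization K V) :=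
  Fintype.ofFinite _

noncomputable instance instDecEqProjectivization (K V : Type*) [DivisionRing K] [AddCommGroup V]
    [Module K V] : DecidableEq (Projectivization K V) :=
  Classical.decEq _

/-- The projective multiset of weight changes of a linear map between linear codes
`U ⊆ F^n` and `V ⊆ F^m`: the multiset `{w(u) - w(φ(u)) : u ∈ P(U)}`. -/
def projWeightChanges {F : Type} [Field F] [Fintype F] [DecidableEq F] {n m : ℕ}
    {U : Submodule F (Fin n → F)} {V : Submodule F (Fin m → F)} (φ : U →ₗ[F] V) : Multiset ℤ :=
  (Finset.univ : Finset (Projectivization F U)).val.map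
    fun p => (hammingNorm (p.rep : Fin n → F) : ℤ) - (hammingNorm ((φ p.rep : V) : Fin m → F) : ℤ)

/-- S is realized by some F-linear map between linear codes. -/
def Realizes (F : Type) [Field F] [Fintype F] [DecidableEq F] (S : Multiset ℤ) : Prop :=
  ∃ (n m : ℕ) (U : Submodule F (Fin n → F)) (V : Submodule F (Fin m → F)) (φ : U →ₗ[F] V),
    projWeightChanges φ = S

/-- A coordinate projection up to monomial equivalence: multiplication by a matrix
with at most one nonzero entry in each row and each column. -/
def IsProjection {F : Type} [Field F] [Fintype F] [DecidableEq F] {n m : ℕ}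
    {U : Submodule F (Fin n → F)} {V : Submodule F (Fin m → F)} (φ : U →ₗ[F] V) : Prop :=
  ∃ M : Matrix (Fin m) (Fin n) F,
    (∀ u : U, ((φ u : Fin m → F)) = M.mulVec (u : Fin n → F)) ∧
    (∀ i j j', M i j ≠ 0 → M i j' ≠ 0 → j = j') ∧
    (∀ i i' j, M i j ≠ 0 → M i' j ≠ 0 → i = i')

/-- A monomial equivalence: multiplication by an n × n matrix with exactly one
nonzero entry in each row and each column. -/
def IsMonomialEquiv {F : Type} [Field F] [Fintype F] [DecidableEq F] {n : ℕ}
    {U V : Submodule F (Fin n → F)} (φ : U →ₗ[F] V) : Prop :=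
  ∃ M : Matrix (Fin n) (Fin n) F,
    (∀ u : U, ((φ u : Fin n → F)) = M.mulVec (u : Fin n → F)) ∧
    (∀ i, ∃! j, M i j ≠ 0) ∧
    (∀ j, ∃! i, M i j ≠ 0)

/-- S is q-projection-forcing: every linear map over a field of order q realizing S
is a projection. -/
def ProjectionForcing (q : ℕ) (S : Multiset ℤ) : Prop :=
  ∀ (F : Type) [Field F] [Fintype F] [DecidableEq F], Fintype.card F = q →
    ∀ (n m : ℕ) (U : Submodule F (Fin n → F)) (V : Submodule F (Fin m → F))
      (φ : U →ₗ[F] V), projWeightChanges φ = S → IsProjection φ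

/-- The matrix M_{k,q}: rows and columns indexed by points of PG(k-1,q), with (v,w)
entry 0 if v ⬝ w = 0 and 1 otherwise. -/
def Mkq (F : Type) [Field F] [Fintype F] [DecidableEq F] (k : ℕ) :
    Matrix (Projectivization F (Fin k → F)) (Projectivization F (Fin k → F)) ℝ :=
  Matrix.of fun v w => if dotProduct v.rep w.rep = 0 then (0 : ℝ) else 1

/-- The q-ary split difference of a multiset S. -/
def splitDiff (q k : ℕ) (S : Multiset ℤ) : ℤ :=
  (((S.sort (· ≤ ·)).take (q ^ (k - 1))).sum) -
    ((q : ℤ) - 1) * (((S.sort (· ≤ ·)).drop (q ^ (k - 1))).sum)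

end

/-!
Fix a basis-free description of the codes: every coordinate of `U` and of `φ(U)` is a linear
functional on `U`. For a projective point `P` of the dual of `U`, let `x(P)` be the number of
coordinates of `U` minus the number of coordinates of `φ(U)` that are nonzero multiples of `P`.
Counting points of `U` off and on hyperplanes shows that, for the `q^(k-1)` points `T` of `P(U)`
off the hyperplane `ker P`, the weight change `s` satisfies `q ∑_T s - (q - 1) ∑ s = q^(k-1) x(P)`.
As the `q^(k-1)` smallest entries of `S` sum to at most `∑_T s`, this gives
`δ_q(S) ≤ q^(k-1) x(P)`, so `δ_q(S) > -q^(k-1)` forces `x(P) ≥ 0` for every `P`. Then each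
nonzero coordinate of `φ(U)` can be matched injectively with a proportional coordinate of `U`,
which is a projection.
-/

open Finset Module
open scoped LinearAlgebra.Projectivization

theorem List.sum_take_card_le_sum_of_le {α : Type*} [AddCommMonoid α] [LinearOrder α]
    [IsOrderedAddMonoid α] {l : List α} (hl : l.Pairwise (· ≤ ·)) {t : Multiset α}
    (ht : t ≤ l) : (l.take (Multiset.card t)).sum ≤ t.sum := by
  induction l generalizing t with
  | nil => simp [Multiset.le_zero.mp ht]
  | cons a l ih =>
    rw [List.pairwise_cons] at hl
    by_cases ha : a ∈ t
    · have ht' : t.erase a ≤ l := by simpa using Multiset.erase_le_erase a ht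
      rw [← Multiset.cons_erase ha, Multiset.card_cons, Multiset.sum_cons, List.take_succ_cons,
        List.sum_cons]
      gcongr
      exact ih hl.2 ht'
    · rw [← Multiset.cons_coe, Multiset.le_cons_of_notMem ha] at ht
      have hlen := Multiset.card_le_card ht
      cases hj : Multiset.card t with
      | zero => simp [Multiset.card_eq_zero.mp hj]
      | succ j =>
        rw [Multiset.coe_card, hj] at hlen
        have hjl : j < l.length := hlen
        calc ((a :: l).take (j + 1)).sum = a + (l.take j).sum := by simp
          _ ≤ l[j] + (l.take j).sum := by gcongr; exact hl.1 _ (List.getElem_mem hjl)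
          _ = (l.take (j + 1)).sum := by rw [List.sum_take_succ _ _ hjl, add_comm]
          _ ≤ t.sum := hj ▸ ih hl.2 ht

theorem splitDiff_le_of_le {q k : ℕ} {S T : Multiset ℤ} (hT : T ≤ S)
    (hcard : Multiset.card T = q ^ (k - 1)) :
    splitDiff q k S ≤ q * T.sum - (q - 1) * S.sum := by
  have hsum : ((S.sort (· ≤ ·)).take (q ^ (k - 1))).sum
      + ((S.sort (· ≤ ·)).drop (q ^ (k - 1))).sum = S.sum := by
    rw [← List.sum_append, List.take_append_drop, ← Multiset.sum_coe, Multiset.sort_eq]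
  have htake := List.sum_take_card_le_sum_of_le (Multiset.pairwise_sort S (· ≤ ·)) (t := T)
    (by rwa [Multiset.sort_eq])
  rw [hcard] at htake
  unfold splitDiff
  nlinarith [mul_le_mul_of_nonneg_left htake (Nat.cast_nonneg (α := ℤ) q)]

theorem Function.Embedding.exists_comp_eq_of_card_fiber_le {α β γ : Type*} [Finite α] [Finite β]
    {f : α → γ} {g : β → γ} (h : ∀ c, Nat.card {a // f a = c} ≤ Nat.card {b // g b = c}) :
    ∃ e : α ↪ β, ∀ a, g (e a) = f a := by
  have (c : γ) : Nonempty ({a // f a = c} ↪ {b // g b = c}) := by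
    have := Fintype.ofFinite {a // f a = c}
    have := Fintype.ofFinite {b // g b = c}
    exact Function.Embedding.nonempty_of_card_le (by simpa [Nat.card_eq_fintype_card] using h c)
  let e c := (this c).some
  refine ⟨(Equiv.sigmaFiberEquiv f).symm.toEmbedding.trans
    ((Function.Embedding.sigmaMap (.refl γ) e).trans (Equiv.sigmaFiberEquiv g).toEmbedding), ?_⟩
  exact fun a => (e (f a) ⟨a, rfl⟩).2

theorem Projectivization.card_eq_pow_of_card_eq {F W : Type*} [Field F] [Finite F]
    [AddCommGroup W] [Module F W] [Finite W] {k : ℕ}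
    (h : Nat.card (ℙ F W) = (Nat.card F ^ k - 1) / (Nat.card F - 1)) :
    Nat.card W = Nat.card F ^ k := by
  have hpos : 0 < Nat.card F ^ k := Nat.pow_pos Nat.card_pos
  rw [Projectivization.card' F W, h, Nat.div_mul_cancel (Nat.sub_one_dvd_pow_sub_one _ k)]
  omega

namespace Module.Dual

variable {F W : Type*} [Field F] [AddCommGroup W] [Module F W]

theorem exists_smul_eq_of_ker_le {f g : Dual F W} (h : LinearMap.ker f ≤ LinearMap.ker g) :
    ∃ c : F, c • f = g := by
  have := mem_span_of_iInf_ker_le_ker (L := fun _ : Unit => f) (K := g) (by simpa using h)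
  simpa [Set.range_const, Submodule.mem_span_singleton] using this

theorem ker_eq_of_ker_le {f g : Dual F W} (hf : f ≠ 0) (h : LinearMap.ker g ≤ LinearMap.ker f) :
    LinearMap.ker g = LinearMap.ker f := by
  obtain ⟨c, rfl⟩ := exists_smul_eq_of_ker_le h
  exact (LinearMap.ker_smul g c (by rintro rfl; simp at hf)).symm

theorem ker_eq_ker_iff_mk_eq {f g : Dual F W} (hf : f ≠ 0) :
    LinearMap.ker g = LinearMap.ker f ↔ ∃ hg : g ≠ 0, Projectivization.mk F g hg = .mk F f hf := by
  constructor
  · intro h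
    have hg : g ≠ 0 := by
      rintro rfl
      exact hf (LinearMap.ker_eq_top.mp (by simpa using h.symm))
    obtain ⟨c, hc⟩ := exists_smul_eq_of_ker_le h.ge
    exact ⟨hg, (Projectivization.mk_eq_mk_iff' F g f hg hf).mpr ⟨c, hc⟩⟩
  · rintro ⟨hg, h⟩
    obtain ⟨c, rfl⟩ := (Projectivization.mk_eq_mk_iff' F g f hg hf).mp h
    exact LinearMap.ker_smul f c (by rintro rfl; simp at hg)

end Module.Dual

section FiniteSpace

variable {F W : Type*} [Field F] [Fintype F] [AddCommGroup W] [Module F W] [Fintype W]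

theorem Projectivization.sum_eq_card_sub_one_nsmul_sum_rep {M : Type*} [AddCommMonoid M]
    (f : W → M) (hf : ∀ (c : Fˣ) (x : W), f (c • x) = f x) (h0 : f 0 = 0) :
    ∑ x, f x = (Fintype.card F - 1) • ∑ p : ℙ F W, f p.rep := by
  classical
  let e := Projectivization.nonZeroEquivProjectivizationProdUnits F W
  have hrep (x : {x : W // x ≠ 0}) : f x = f (e x).1.rep := by
    obtain ⟨c, hc⟩ := Projectivization.exists_smul_eq_mk_rep F x.1 x.2
    rw [← hf c, hc]; rfl
  calc ∑ x, f x = ∑ x : {x : W // x ≠ 0}, f x := by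
        rw [← Finset.sum_erase univ h0]
        exact Finset.sum_subtype _ (by simp) f
    _ = ∑ y : ℙ F W × Fˣ, f y.1.rep := by
        rw [← e.sum_comp]; simp only [hrep]
    _ = _ := by
        rw [Fintype.sum_prod_type, ← Fintype.card_units, Finset.smul_sum]; simp

variable [DecidableEq F]

theorem card_filter_eq_zero_and_eq_zero_mul_card (f g : Dual F W) {x₀ : W} (hg : g x₀ = 0)
    (hf : f x₀ ≠ 0) :
    #{x | g x = 0 ∧ f x = 0} * Fintype.card F = #{x | g x = 0} := by
  set y₀ := (f x₀)⁻¹ • x₀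
  have hfy : f y₀ = 1 := by simp [y₀, hf]
  have hgy : g y₀ = 0 := by simp [y₀, hg]
  let e : {x // g x = 0} ≃ {x // g x = 0 ∧ f x = 0} × F :=
    { toFun x := (⟨x - f x • y₀, by simp [x.2, hfy, hgy]⟩, f x)
      invFun y := ⟨y.1 + y.2 • y₀, by simp [y.1.2.1, hgy]⟩
      left_inv x := by ext; simp
      right_inv y := by ext <;> simp [y.1.2.2, hfy] }
  simpa only [Fintype.card_subtype, Fintype.card_prod] using (Fintype.card_congr e).symm

theorem card_filter_eq_zero_mul_card {f : Dual F W} (hf : f ≠ 0) :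
    #{x | f x = 0} * Fintype.card F = Fintype.card W := by
  obtain ⟨x₀, hx₀⟩ := DFunLike.ne_iff.mp hf
  simpa using card_filter_eq_zero_and_eq_zero_mul_card f 0 (x₀ := x₀) rfl hx₀

theorem card_filter_rep_ne_zero_mul_card {f : Dual F W} (hf : f ≠ 0) :
    #{p : ℙ F W | f p.rep ≠ 0} * Fintype.card F = Fintype.card W := by
  have hq := Fintype.one_lt_card (α := F)
  have hne : #{x | f x ≠ 0} = (Fintype.card F - 1) * #{p : ℙ F W | f p.rep ≠ 0} := by
    have := Projectivization.sum_eq_card_sub_one_nsmul_sum_rep (F := F)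
      (fun x => if f x ≠ 0 then 1 else 0) (fun c x => by simp [Units.smul_def]) (by simp)
    rwa [← card_filter, ← card_filter, nsmul_eq_mul, Nat.cast_id] at this
  have hzero := card_filter_eq_zero_mul_card hf
  have hW : #{x | f x ≠ 0} + #{x | f x = 0} = Fintype.card W := by
    rw [add_comm]; exact card_filter_add_card_filter_not _
  apply Nat.eq_of_mul_eq_mul_left (show 0 < Fintype.card F - 1 by omega)
  zify [hq.le] at hne hzero hW ⊢
  linear_combination (Fintype.card F : ℤ) * hW - (Fintype.card F : ℤ) * hne - hzero

theorem card_ne_zero_sub_mul_card_eq_zero_and_ne_zero {f : Dual F W} (hf : f ≠ 0)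
    (g : Dual F W) :
    (#{x | g x ≠ 0} : ℤ) - Fintype.card F * #{x | f x = 0 ∧ g x ≠ 0} =
      if LinearMap.ker g = LinearMap.ker f then #{x | f x ≠ 0} else 0 := by
  split_ifs with h
  · have hgf (x : W) : g x = 0 ↔ f x = 0 := by
      simpa using SetLike.ext_iff.mp h x
    simp [hgf]
  · obtain ⟨x₀, hgx₀, hfx₀⟩ : ∃ x, g x = 0 ∧ f x ≠ 0 := by
      by_contra! H
      exact h (Module.Dual.ker_eq_of_ker_le hf fun x hx => H x hx)
    have hgf := card_filter_eq_zero_and_eq_zero_mul_card f g hgx₀ hfx₀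
    have hf := card_filter_eq_zero_mul_card hf
    have hg : #{x | g x ≠ 0} + #{x | g x = 0} = Fintype.card W := by
      rw [add_comm]; exact card_filter_add_card_filter_not _
    have hfg : #{x | f x = 0 ∧ g x ≠ 0} + #{x | g x = 0 ∧ f x = 0} = #{x | f x = 0} := by
      rw [← card_filter_add_card_filter_not (s := {x | f x = 0}) (fun x => g x ≠ 0)]
      simp only [filter_filter, not_not, and_comm]
    zify at hg hfg hgf hf
    linear_combination hg - (Fintype.card F : ℤ) * hfg + hgf - hf

end FiniteSpace

section Codes

variable {F W ι ι' : Type*} [Field F] [AddCommGroup W] [Module F W]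

def coordFun (L : W →ₗ[F] ι → F) (i : ι) : Dual F W := LinearMap.proj i ∘ₗ L

@[simp]
theorem coordFun_apply (L : W →ₗ[F] ι → F) (i : ι) (x : W) : coordFun L i x = L x i := rfl

/-- The multiplicity of `P` among the columns of a generator matrix of the code `L(W)`. -/
noncomputable def coordMult (L : W →ₗ[F] ι → F) (P : ℙ F (Dual F W)) : ℕ :=
  Nat.card {i : {i // coordFun L i ≠ 0} // Projectivization.mk F _ i.2 = P}

theorem coordMult_eq_card_filter [Fintype ι] (L : W →ₗ[F] ι → F) (P : ℙ F (Dual F W)) :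
    coordMult L P = #{i | LinearMap.ker (coordFun L i) = LinearMap.ker P.rep} := by
  classical
  rw [coordMult, Nat.card_congr (Equiv.subtypeSubtypeEquivSubtypeExists _ _),
    Nat.card_eq_fintype_card, ← Fintype.card_subtype]
  refine Fintype.card_congr (Equiv.subtypeEquivRight fun i => ?_)
  rw [Module.Dual.ker_eq_ker_iff_mk_eq P.rep_nonzero, P.mk_rep]

theorem exists_injective_coordFun_eq_smul [Finite ι] [Finite ι'] {L : W →ₗ[F] ι → F}
    {L' : W →ₗ[F] ι' → F} (h : ∀ P, coordMult L' P ≤ coordMult L P) :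
    ∃ σ : {i // coordFun L' i ≠ 0} → ι, Function.Injective σ ∧
      ∀ i, ∃ c : F, c • coordFun L (σ i) = coordFun L' i := by
  obtain ⟨e, he⟩ := Function.Embedding.exists_comp_eq_of_card_fiber_le
    (f := fun i : {i // coordFun L' i ≠ 0} => Projectivization.mk F _ i.2)
    (g := fun j : {j // coordFun L j ≠ 0} => Projectivization.mk F _ j.2) h
  refine ⟨fun i => e i, Subtype.val_injective.comp e.injective, fun i => ?_⟩
  exact (Projectivization.mk_eq_mk_iff' F _ _ i.2 (e i).2).mp (he i).symm

theorem exists_sparse_matrix_of_coordMult_le [Fintype ι] [Finite ι'] {L : W →ₗ[F] ι → F}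
    {L' : W →ₗ[F] ι' → F} (h : ∀ P, coordMult L' P ≤ coordMult L P) :
    ∃ M : Matrix ι' ι F, (∀ x, L' x = M *ᵥ L x) ∧
      (∀ i j j', M i j ≠ 0 → M i j' ≠ 0 → j = j') ∧
      (∀ i i' j, M i j ≠ 0 → M i' j ≠ 0 → i = i') := by
  classical
  obtain ⟨σ, hσ, hc⟩ := exists_injective_coordFun_eq_smul h
  choose c hc using hc
  let M : Matrix ι' ι F := Matrix.of fun i =>
    if hi : coordFun L' i ≠ 0 then Pi.single (σ ⟨i, hi⟩) (c ⟨i, hi⟩) else 0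
  have hM {i j} (hij : M i j ≠ 0) : ∃ hi : coordFun L' i ≠ 0, σ ⟨i, hi⟩ = j := by
    by_cases hi : coordFun L' i ≠ 0
    · by_contra hne
      simp only [M, Matrix.of_apply, dif_pos hi] at hij
      exact hij (Pi.single_eq_of_ne (fun h => hne ⟨hi, h.symm⟩) _)
    · exact absurd (by simp only [M, Matrix.of_apply, dif_neg hi, Pi.zero_apply]) hij
  refine ⟨M, fun x => funext fun i => ?_, fun i j j' hj hj' => ?_, fun i i' j hi hi' => ?_⟩
  · by_cases hi : coordFun L' i ≠ 0
    · simp only [Matrix.mulVec, M, Matrix.of_apply, dif_pos hi, single_dotProduct]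
      rw [← coordFun_apply, ← hc ⟨i, hi⟩, LinearMap.smul_apply, coordFun_apply, smul_eq_mul]
    · simp only [Matrix.mulVec, M, Matrix.of_apply, dif_neg hi, zero_dotProduct]
      rw [← coordFun_apply, not_not.mp hi, LinearMap.zero_apply]
  · obtain ⟨_, rfl⟩ := hM hj
    obtain ⟨_, rfl⟩ := hM hj'
    rfl
  · obtain ⟨hi, rfl⟩ := hM hi
    obtain ⟨_, hσi⟩ := hM hi'
    exact congrArg Subtype.val (hσ hσi).symm

variable [Fintype F] [DecidableEq F] [Fintype W] [Fintype ι]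

theorem sum_hammingNorm_sub_mul_sum_hammingNorm (L : W →ₗ[F] ι → F) (P : ℙ F (Dual F W)) :
    ∑ x, (hammingNorm (L x) : ℤ) - Fintype.card F * ∑ x with P.rep x = 0, (hammingNorm (L x) : ℤ)
      = #{x | P.rep x ≠ 0} * coordMult L P := by
  have hL (x : W) : (hammingNorm (L x) : ℤ) = ∑ i, if coordFun L i x ≠ 0 then 1 else 0 := by
    rw [hammingNorm, Finset.card_filter]
    push_cast
    rfl
  simp_rw [hL]
  rw [Finset.sum_comm, Finset.sum_comm (s := filter _ _), Finset.mul_sum, ← Finset.sum_sub_distrib]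
  simp only [← Finset.sum_filter, Finset.sum_const, nsmul_one, filter_filter]
  simp only [card_ne_zero_sub_mul_card_eq_zero_and_ne_zero P.rep_nonzero, coordMult_eq_card_filter]
  push_cast
  rw [Finset.sum_ite, Finset.sum_const_zero, add_zero, Finset.sum_const, nsmul_eq_mul, mul_comm]

theorem sum_rep_hammingNorm_sub_mul_sum_rep_hammingNorm (L : W →ₗ[F] ι → F)
    (P : ℙ F (Dual F W)) :
    ∑ p : ℙ F W, (hammingNorm (L p.rep) : ℤ)
        - Fintype.card F * ∑ p : ℙ F W with P.rep p.rep = 0, (hammingNorm (L p.rep) : ℤ)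
      = #{p : ℙ F W | P.rep p.rep ≠ 0} * coordMult L P := by
  have hq : (Fintype.card F : ℤ) - 1 ≠ 0 := by
    have := Fintype.one_lt_card (α := F); omega
  have hL (c : Fˣ) (x : W) : (hammingNorm (L (c • x)) : ℤ) = hammingNorm (L x) := by
    rw [Units.smul_def, map_smul, hammingNorm_smul fun _ => c.isUnit.isSMulRegular _]
  have hP (c : Fˣ) (x : W) : P.rep (c • x) = 0 ↔ P.rep x = 0 := by
    simp [Units.smul_def]
  have hsum (f : W → ℤ) (hf : ∀ (c : Fˣ) x, f (c • x) = f x) (h0 : f 0 = 0) :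
      ∑ x, f x = ((Fintype.card F : ℤ) - 1) * ∑ p : ℙ F W, f p.rep := by
    rw [Projectivization.sum_eq_card_sub_one_nsmul_sum_rep f hf h0, nsmul_eq_mul,
      Nat.cast_sub Fintype.card_pos, Nat.cast_one]
  have key := sum_hammingNorm_sub_mul_sum_hammingNorm L P
  rw [hsum _ (fun c x => hL c x) (by simp), Finset.sum_filter,
    hsum _ (fun c x => by simp only [hL, hP]) (by simp), Finset.natCast_card_filter,
    hsum _ (fun c x => by simp only [ne_eq, hP]) (by simp), ← Finset.natCast_card_filter,
    ← Finset.sum_filter] at key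
  apply mul_left_cancel₀ hq
  linear_combination key

theorem splitDiff_le_mul_coordMult_sub [Fintype ι'] {k : ℕ} (hk : 0 < k)
    (hW : Fintype.card W = Fintype.card F ^ k) (L : W →ₗ[F] ι → F) (L' : W →ₗ[F] ι' → F)
    (P : ℙ F (Dual F W)) :
    splitDiff (Fintype.card F) k
        (univ.val.map fun p : ℙ F W => (hammingNorm (L p.rep) : ℤ) - hammingNorm (L' p.rep))
      ≤ Fintype.card F ^ (k - 1) * ((coordMult L P : ℤ) - coordMult L' P) := by
  set q := Fintype.card F
  set s := fun p : ℙ F W => (hammingNorm (L p.rep) : ℤ) - hammingNorm (L' p.rep)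
  set T : Finset (ℙ F W) := {p | P.rep p.rep ≠ 0}
  have hT : #T = q ^ (k - 1) := by
    have h := card_filter_rep_ne_zero_mul_card (W := W) P.rep_nonzero
    rw [hW, ← pow_sub_one_mul hk.ne'] at h
    exact Nat.eq_of_mul_eq_mul_right Fintype.card_pos h
  have hsplit := splitDiff_le_of_le (q := q) (k := k) (Multiset.map_le_map (f := s)
    (Finset.val_le_iff.mpr (subset_univ T))) (by simp [hT])
  change _ ≤ q * (∑ p ∈ T, s p) - (q - 1) * ∑ p, s p at hsplit
  have hsum := Finset.sum_filter_add_sum_filter_not univ (fun p : ℙ F W => P.rep p.rep ≠ 0) s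
  simp only [s, not_not, Finset.sum_sub_distrib] at hsum hsplit
  have hL := sum_rep_hammingNorm_sub_mul_sum_rep_hammingNorm L P
  have hL' := sum_rep_hammingNorm_sub_mul_sum_rep_hammingNorm L' P
  rw [hT] at hL hL'
  push_cast at hL hL' ⊢
  linear_combination hsplit + hL - hL' + (q : ℤ) * hsum

end Codes

theorem stmt_3_general (q k : ℕ) (hk : 0 < k) (S : Multiset ℤ)
    (hcard : Multiset.card S = (q ^ k - 1) / (q - 1))
    (hδ : splitDiff q k S > -(q : ℤ) ^ (k - 1)) :
    ProjectionForcing q S := by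
  intro F _ _ _ hF n m U V φ hφ
  subst hF
  have := Fintype.ofFinite U
  have hU : Fintype.card U = Fintype.card F ^ k := by
    rw [← Nat.card_eq_fintype_card, ← Nat.card_eq_fintype_card (α := F)]
    apply Projectivization.card_eq_pow_of_card_eq
    rw [Nat.card_eq_fintype_card, Nat.card_eq_fintype_card, ← hcard, ← hφ]
    simp [projWeightChanges]
  have hmult (P : ℙ F (Module.Dual F U)) :
      coordMult (V.subtype ∘ₗ φ) P ≤ coordMult U.subtype P := by
    have hP := splitDiff_le_mul_coordMult_sub hk hU U.subtype (V.subtype ∘ₗ φ) P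
    have hq : (0 : ℤ) < Fintype.card F ^ (k - 1) := by positivity
    rw [← hφ, gt_iff_lt, ← mul_neg_one] at hδ
    have := lt_of_mul_lt_mul_left (hδ.trans_le hP) hq.le
    omega
  obtain ⟨M, hM, hrow, hcol⟩ := exists_sparse_matrix_of_coordMult_le hmult
  exact ⟨M, fun u => hM u, hrow, hcol⟩

/-- if `S` has size `(q^k - 1)/(q - 1)` and split difference
`δ_q(S) > -q^(k-1)`, then `S` is q-projection-forcing. -/
theorem stmt_3 (q k : ℕ) (hq : IsPrimePow q) (hk : 0 < k) (S : Multiset ℤ)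
    (hcard : Multiset.card S = (q ^ k - 1) / (q - 1))
    (hδ : splitDiff q k S > -(q : ℤ) ^ (k - 1)) :
    ProjectionForcing q S :=
  stmt_3_general q k hk S hcard hδ
end

section
/- Let k be a positive integer and q a prime power. The matrix M_{k,q} is invertible over the reals, and its inverse is (1/q^{k−1})(q · M_{k,q}^T − (q−1) J), where J is the all-ones matrix and M_{k,q}^T is the transpose of M_{k,q}. -/
open Matrix

/-!
Write `χ t` for `0` if `t = 0` and `1` otherwise, and `q = |F|`. The `(v, w)` entry of
`M (q Mᵀ - (q - 1) J)` is `∑ᵤ χ(v·u) (q χ(w·u) - (q - 1))`, a sum over points `u`. The summand is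
invariant under scaling `u` and vanishes at `0`, so `q - 1` times it is the same sum over all
vectors `x ∈ F^k`. If `a₁, …, aᵣ` are linearly independent, `x ↦ (aᵢ·x)ᵢ` is a surjective linear
map onto `F^r`, so it hits every value equally often; hence `q^r ∑ₓ ∏ᵢ fᵢ(aᵢ·x) = q^k ∏ᵢ ∑ₜ fᵢ(t)`.
With `r = 1` (diagonal, `χ² = χ`) the entry is `q^(k-1)`; with `r = 2` for two distinct points
the two terms cancel.
-/

open Finset
open scoped LinearAlgebra.Projectivization

namespace Projectivization

theorem sum_eq_card_units_nsmul_sum_rep {K V M : Type*} [DivisionRing K] [Fintype K]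
    [DecidableEq K] [AddCommGroup V] [Module K V] [Fintype V] [AddCommMonoid M]
    (g : V → M) (hg0 : g 0 = 0) (hg : ∀ (c : Kˣ) (x : V), g (c • x) = g x) :
    ∑ x, g x = Fintype.card Kˣ • ∑ p : ℙ K V, g p.rep := by
  classical
  let e : ℙ K V × Kˣ → {x : V // x ≠ 0} := fun pc =>
    ⟨pc.2 • pc.1.rep, (smul_ne_zero_iff_ne pc.2).2 pc.1.rep_nonzero⟩
  have he : e.Bijective := by
    refine ⟨fun ⟨p, c⟩ ⟨p', c'⟩ h => ?_, fun ⟨x, hx⟩ => ?_⟩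
    · have h : c • p.rep = c' • p'.rep := congrArg Subtype.val h
      obtain rfl : p = p' := by
        rw [← mk_rep p, ← mk_rep p', mk_eq_mk_iff]
        exact ⟨c⁻¹ * c', by rw [mul_smul, ← h, inv_smul_smul]⟩
      exact Prod.ext rfl (Units.ext (smul_left_injective K p.rep_nonzero h))
    · obtain ⟨a, ha⟩ := exists_smul_eq_mk_rep K x hx
      exact ⟨(mk K x hx, a⁻¹), Subtype.ext (by simp [e, ← ha])⟩
  rw [Fintype.sum_eq_add_sum_subtype_ne g 0, hg0, zero_add,
    ← Fintype.sum_bijective e he (fun pc => g pc.1.rep) _ fun pc => (hg pc.2 pc.1.rep).symm,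
    Fintype.sum_prod_type, smul_sum]
  simp

end Projectivization

theorem AddMonoidHom.card_nsmul_sum_comp_of_surjective {G H M : Type*} [AddCommGroup G]
    [Fintype G] [AddCommGroup H] [Fintype H] [DecidableEq H] [AddCommMonoid M] (ψ : G →+ H)
    (hψ : Function.Surjective ψ) (g : H → M) :
    Fintype.card H • ∑ x, g (ψ x) = Fintype.card G • ∑ b, g b := by
  have hfiber (b : H) : #{x | ψ x = b} = #{x | ψ x = 0} :=
    AddMonoidHom.card_fiber_eq_of_mem_range ψ (hψ b) (hψ 0)
  have hG : Fintype.card G = Fintype.card H * #{x | ψ x = 0} := by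
    rw [← card_univ, card_eq_sum_card_fiberwise (f := ψ) (t := univ) (by simp)]
    simp [hfiber]
  have hsum : ∑ x, g (ψ x) = #{x | ψ x = 0} • ∑ b, g b := by
    rw [← sum_fiberwise univ ψ, smul_sum]
    refine sum_congr rfl fun b _ => ?_
    rw [sum_congr rfl fun x hx => by rw [(mem_filter.1 hx).2], sum_const, hfiber]
  rw [hsum, hG, mul_smul]

theorem Matrix.mulVec_surjective_of_linearIndependent_rows {m n K : Type*} [Field K] [Fintype m]
    [Fintype n] {A : Matrix m n K} (hA : LinearIndependent K A.row) :
    Function.Surjective A.mulVec := by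
  have : LinearMap.range A.mulVecLin = ⊤ := by
    apply Submodule.eq_top_of_finrank_eq
    rw [← Matrix.rank, rank_eq_finrank_span_row, finrank_span_eq_card hA,
      Module.finrank_fintype_fun_eq_card]
  exact LinearMap.range_eq_top.1 this

theorem Matrix.card_pow_nsmul_sum_prod_dotProduct {ι n K R : Type*} [Field K] [Fintype K]
    [Fintype ι] [DecidableEq ι] [Fintype n] [DecidableEq n] [CommSemiring R] {a : ι → n → K}
    (ha : LinearIndependent K a) (f : ι → K → R) :
    Fintype.card K ^ Fintype.card ι • ∑ x : n → K, ∏ i, f i (a i ⬝ᵥ x) =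
      Fintype.card K ^ Fintype.card n • ∏ i, ∑ t, f i t := by
  classical
  have hsurj := mulVec_surjective_of_linearIndependent_rows (A := of a) ha
  have := (of a).mulVecLin.toAddMonoidHom.card_nsmul_sum_comp_of_surjective hsurj
    fun y => ∏ i, f i (y i)
  rwa [Fintype.prod_sum, ← Fintype.card_fun, ← Fintype.card_fun]

section

variable {F : Type*} [DecidableEq F]

def nonzeroIndicator [Zero F] (t : F) : ℝ := if t = 0 then 0 else 1

theorem nonzeroIndicator_zero [Zero F] : nonzeroIndicator (0 : F) = 0 := if_pos rfl

theorem nonzeroIndicator_mul_self [Zero F] (t : F) :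
    nonzeroIndicator t * nonzeroIndicator t = nonzeroIndicator t := by
  unfold nonzeroIndicator; split_ifs <;> norm_num

theorem nonzeroIndicator_mul_left [MulZeroClass F] [NoZeroDivisors F] {c : F} (hc : c ≠ 0)
    (t : F) : nonzeroIndicator (c * t) = nonzeroIndicator t := by
  simp [nonzeroIndicator, hc]

theorem sum_nonzeroIndicator [Zero F] [Fintype F] :
    ∑ t : F, nonzeroIndicator t = (Fintype.card F : ℝ) - 1 := by
  simp [nonzeroIndicator, Finset.sum_ite, Finset.filter_ne', Finset.card_univ,
    Nat.cast_pred Fintype.card_pos]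

variable [Field F] [Fintype F] {n : Type*} [Fintype n] [DecidableEq n]

theorem card_mul_sum_nonzeroIndicator_dotProduct {a : n → F} (ha : a ≠ 0) :
    (Fintype.card F : ℝ) * ∑ x : n → F, nonzeroIndicator (a ⬝ᵥ x) =
      (Fintype.card F : ℝ) ^ Fintype.card n * ((Fintype.card F : ℝ) - 1) := by
  have := card_pow_nsmul_sum_prod_dotProduct (LinearIndependent.of_subsingleton (v := ![a]) 0 ha)
    fun _ => nonzeroIndicator
  simpa [sum_nonzeroIndicator] using this

theorem card_sq_mul_sum_nonzeroIndicator_dotProduct_mul {a b : n → F}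
    (hab : LinearIndependent F ![a, b]) :
    (Fintype.card F : ℝ) ^ 2 * ∑ x : n → F, nonzeroIndicator (a ⬝ᵥ x) * nonzeroIndicator (b ⬝ᵥ x) =
      (Fintype.card F : ℝ) ^ Fintype.card n * ((Fintype.card F : ℝ) - 1) ^ 2 := by
  have := card_pow_nsmul_sum_prod_dotProduct hab fun _ => nonzeroIndicator
  simpa [sum_nonzeroIndicator, Fin.prod_univ_two, sq] using this

end

section

variable {F : Type} [Field F] [Fintype F] [DecidableEq F] {k : ℕ}

theorem mkq_apply (v w : ℙ F (Fin k → F)) :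
    Mkq F k v w = nonzeroIndicator (v.rep ⬝ᵥ w.rep) := rfl

theorem card_sub_one_mul_mkq_mul_apply (v w : ℙ F (Fin k → F)) :
    ((Fintype.card F : ℝ) - 1) * (Mkq F k * ((Fintype.card F : ℝ) • (Mkq F k)ᵀ -
        ((Fintype.card F : ℝ) - 1) • of fun _ _ => 1) : Matrix _ _ ℝ) v w =
      (Fintype.card F : ℝ) * ∑ x, nonzeroIndicator (v.rep ⬝ᵥ x) * nonzeroIndicator (w.rep ⬝ᵥ x) -
        ((Fintype.card F : ℝ) - 1) * ∑ x, nonzeroIndicator (v.rep ⬝ᵥ x) := by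
  set q : ℝ := (Fintype.card F : ℝ)
  let g : (Fin k → F) → ℝ := fun x =>
    nonzeroIndicator (v.rep ⬝ᵥ x) * (q * nonzeroIndicator (w.rep ⬝ᵥ x) - (q - 1))
  have hsum := Projectivization.sum_eq_card_units_nsmul_sum_rep (K := F) g
    (by simp [g, nonzeroIndicator_zero]) fun c x => by
      simp only [g, Units.smul_def, dotProduct_smul, smul_eq_mul,
        nonzeroIndicator_mul_left c.ne_zero]
  have hunits : (Fintype.card Fˣ : ℝ) = q - 1 := by
    rw [Fintype.card_units, Nat.cast_pred Fintype.card_pos]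
  rw [nsmul_eq_mul, hunits] at hsum
  calc _ = ∑ x, g x := by simp [hsum, mul_apply, g, mkq_apply]
    _ = _ := by
      rw [mul_sum, mul_sum, ← sum_sub_distrib]
      exact sum_congr rfl fun _ _ => by ring

theorem mkq_mul_card_smul_transpose_sub :
    Mkq F k * ((Fintype.card F : ℝ) • (Mkq F k)ᵀ - ((Fintype.card F : ℝ) - 1) • of fun _ _ => 1) =
      (Fintype.card F : ℝ) ^ (k - 1) • (1 : Matrix _ _ ℝ) := by
  set q : ℝ := (Fintype.card F : ℝ)
  have hq : 1 < q := Nat.one_lt_cast.2 Fintype.one_lt_card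
  ext v w
  have hentry := card_sub_one_mul_mkq_mul_apply v w
  have hcount_v := card_mul_sum_nonzeroIndicator_dotProduct v.rep_nonzero
  rw [Fintype.card_fin] at hcount_v
  rcases eq_or_ne v w with rfl | hvw
  · have hk : k ≠ 0 := by
      rintro rfl
      exact v.rep_nonzero (Subsingleton.elim _ _)
    have hpow : q ^ k = q * q ^ (k - 1) := by rw [← pow_succ', Nat.sub_add_cancel (by omega)]
    simp only [nonzeroIndicator_mul_self] at hentry
    rw [Matrix.smul_apply, one_apply_eq, smul_eq_mul, mul_one]
    refine mul_left_cancel₀ (by positivity : (q - 1) * q ≠ 0) ?_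
    linear_combination q * hentry + hcount_v + (q - 1) * hpow
  · have hindep : LinearIndependent F ![v.rep, w.rep] := by
      have := Projectivization.independent_iff.1
        ((Projectivization.independent_pair_iff_ne v w).2 hvw)
      rwa [← FinVec.map_eq] at this
    have hcount_vw := card_sq_mul_sum_nonzeroIndicator_dotProduct_mul hindep
    rw [Fintype.card_fin] at hcount_vw
    rw [Matrix.smul_apply, one_apply_ne hvw, smul_zero]
    refine mul_left_cancel₀ (by positivity : (q - 1) * q ^ 2 ≠ 0) ?_
    linear_combination q ^ 2 * hentry + q * hcount_vw - q * (q - 1) * hcount_v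

end

theorem stmt_4_general (q k : ℕ)
    (F : Type) [Field F] [Fintype F] [DecidableEq F] (hF : Fintype.card F = q) :
    IsUnit (Mkq F k) ∧
      (Mkq F k)⁻¹ = ((1 : ℝ) / (q : ℝ) ^ (k - 1)) •
        ((q : ℝ) • (Mkq F k)ᵀ - ((q : ℝ) - 1) • (Matrix.of fun _ _ => (1 : ℝ))) := by
  subst hF
  have hright : Mkq F k * (((1 : ℝ) / (Fintype.card F : ℝ) ^ (k - 1)) •
      ((Fintype.card F : ℝ) • (Mkq F k)ᵀ - ((Fintype.card F : ℝ) - 1) • of fun _ _ => 1)) = 1 := by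
    have : (Fintype.card F : ℝ) ≠ 0 := Nat.cast_ne_zero.2 Fintype.card_ne_zero
    rw [Matrix.mul_smul, mkq_mul_card_smul_transpose_sub, smul_smul, one_div,
      inv_mul_cancel₀ (pow_ne_zero _ this), one_smul]
  exact ⟨(isUnit_iff_isUnit_det _).2 (isUnit_det_of_right_inverse hright),
    inv_eq_right_inv hright⟩

/-- `M_{k,q}` is invertible over ℝ, with inverse
`(1/q^(k-1)) (q M_{k,q}ᵀ - (q-1) J)`, `J` the all-ones matrix. -/
theorem stmt_4 (q k : ℕ) (hq : IsPrimePow q) (hk : 0 < k)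
    (F : Type) [Field F] [Fintype F] [DecidableEq F] (hF : Fintype.card F = q) :
    IsUnit (Mkq F k) ∧
      (Mkq F k)⁻¹ = ((1 : ℝ) / (q : ℝ) ^ (k - 1)) •
        ((q : ℝ) • (Mkq F k)ᵀ - ((q : ℝ) - 1) • (Matrix.of fun _ _ => (1 : ℝ))) :=
  stmt_4_general q k F hF
end

section
/- Let k be a positive integer and q a prime power. The real matrix M_{k,q} is invertible. -/
open Matrix

/-! The entry of `M Mᵀ` at `(v, w)` counts the points `p` with `v ⬝ p ≠ 0` and
`w ⬝ p ≠ 0`. Two distinct points of `PG(k-1, q)` have linearly independent representatives,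
so `u ↦ (v ⬝ u, w ⬝ u)` maps `F^k` onto `F^2` with fibres of equal size; counting the vectors
with both coordinates nonzero and dividing by the `q - 1` representatives of each point gives
`M Mᵀ = q^(k-2) (I + (q - 1) J)`, `J` the all-ones matrix. This matrix is positive definite,
so `M Mᵀ`, hence `M`, is invertible. -/

open Finset
open scoped LinearAlgebra.Projectivization

theorem card_filter_comp_mul_card_of_surjective {G M F : Type*} [AddGroup G] [Fintype G]
    [AddMonoid M] [Fintype M] [DecidableEq M] [FunLike F G M] [AddMonoidHomClass F G M]
    (f : F) (hf : Function.Surjective f) (P : M → Prop) [DecidablePred P] :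
    #{g | P (f g)} * Fintype.card M = Fintype.card G * #{m | P m} := by
  have hfiber (m : M) : #{g | f g = m} = #{g | f g = 0} :=
    AddMonoidHom.card_fiber_eq_of_mem_range f (hf m) (hf 0)
  have hG : Fintype.card G = Fintype.card M * #{g | f g = 0} := by
    rw [← card_univ, card_eq_sum_card_fiberwise (f := f) (t := univ) (by simp)]
    simp [hfiber]
  have hP : #{g | P (f g)} = #{m | P m} * #{g | f g = 0} := by
    rw [card_eq_sum_card_fiberwise (f := f) (t := {m | P m}) (by intro g; simp),
      sum_congr rfl fun m hm => ?_, sum_const, smul_eq_mul]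
    rw [filter_filter, ← hfiber m]
    congr 1; ext g
    simp only [mem_filter, mem_univ, true_and, and_iff_right_iff_imp]
    rintro rfl; simpa using hm
  rw [hP, hG]; ring

theorem Matrix.mulVecLin_surjective_of_linearIndependent {K m n : Type*} [Field K] [Fintype m]
    [Fintype n] {A : Matrix m n K} (hA : LinearIndependent K A.row) :
    Function.Surjective A.mulVecLin := by
  rw [← LinearMap.range_eq_top]
  apply Submodule.eq_top_of_finrank_eq
  rw [Module.finrank_fintype_fun_eq_card, ← hA.rank_matrix]
  rfl

theorem Matrix.card_filter_forall_mulVec_ne_zero_mul_pow {K m n : Type*} [Field K] [Fintype K]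
    [DecidableEq K] [Fintype m] [DecidableEq m] [Fintype n] [DecidableEq n] {A : Matrix m n K}
    (hA : LinearIndependent K A.row) :
    #{u | ∀ i, (A *ᵥ u) i ≠ 0} * Fintype.card K ^ Fintype.card m
      = Fintype.card K ^ Fintype.card n * (Fintype.card K - 1) ^ Fintype.card m := by
  have hunits : #{w : m → K | ∀ i, w i ≠ 0} = (Fintype.card K - 1) ^ Fintype.card m := by
    have : ({w : m → K | ∀ i, w i ≠ 0} : Finset _)
        = Fintype.piFinset fun _ => univ.erase 0 := by
      ext w; simp
    rw [this, Fintype.card_piFinset, prod_const, card_erase_of_mem (mem_univ 0), card_univ,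
      card_univ]
  have h := card_filter_comp_mul_card_of_surjective A.mulVecLin
    (mulVecLin_surjective_of_linearIndependent hA) (fun w => ∀ i, w i ≠ 0)
  rw [hunits, Fintype.card_fun, Fintype.card_fun] at h
  exact h

theorem Projectivization.bijective_units_smul_rep (K V : Type*) [Field K] [AddCommGroup V]
    [Module K V] :
    Function.Bijective fun x : ℙ K V × Kˣ =>
      (⟨(x.2 : K) • x.1.rep, smul_ne_zero x.2.ne_zero x.1.rep_nonzero⟩ :
        {v : V // v ≠ 0}) := by
  constructor
  · rintro ⟨p, c⟩ ⟨p', c'⟩ h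
    have hv : (c : K) • p.rep = (c' : K) • p'.rep := congrArg Subtype.val h
    have hp : p = p' := by
      rw [← p.mk_rep, ← p'.mk_rep, mk_eq_mk_iff' K _ _ p.rep_nonzero p'.rep_nonzero]
      exact ⟨(c : K)⁻¹ * c', by
        rw [mul_smul, ← hv, smul_smul, inv_mul_cancel₀ c.ne_zero, one_smul]⟩
    subst hp
    exact Prod.ext rfl (Units.ext (smul_left_injective K p.rep_nonzero hv))
  · rintro ⟨u, hu⟩
    obtain ⟨c, hc⟩ := (mk_eq_mk_iff K _ _ hu (mk K u hu).rep_nonzero).1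
      (mk K u hu).mk_rep.symm
    exact ⟨(mk K u hu, c), Subtype.ext hc⟩

theorem Projectivization.sum_eq_nsmul_sum_rep {K V M : Type*} [Field K] [Fintype K]
    [AddCommGroup V] [Module K V] [Fintype V] [AddCommMonoid M] (g : V → M) (h0 : g 0 = 0)
    (hsmul : ∀ (c : K) (u : V), c ≠ 0 → g (c • u) = g u) :
    ∑ u, g u = (Fintype.card K - 1) • ∑ p : ℙ K V, g p.rep := by
  classical
  calc ∑ u, g u = ∑ u : {v : V // v ≠ 0}, g u := by
        rw [← sum_erase _ h0, ← sum_subtype]; simp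
    _ = ∑ x : ℙ K V × Kˣ, g ((x.2 : K) • x.1.rep) :=
        ((bijective_units_smul_rep K V).sum_comp (g ∘ Subtype.val)).symm
    _ = (Fintype.card K - 1) • ∑ p : ℙ K V, g p.rep := by
        simp [Fintype.sum_prod_type, hsmul, smul_sum, Fintype.card_units]

theorem Projectivization.sum_ite_forall_dotProduct_rep_ne_zero {K ι n : Type*} [Field K]
    [Fintype K] [DecidableEq K] [Fintype ι] [DecidableEq ι] [Nonempty ι] [Fintype n]
    [DecidableEq n] {x : ι → ℙ K (n → K)} (hx : Independent x) :
    ((Fintype.card K : ℝ) - 1) * (Fintype.card K : ℝ) ^ Fintype.card ι *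
        ∑ p : ℙ K (n → K), (if ∀ i, (x i).rep ⬝ᵥ p.rep ≠ 0 then 1 else 0)
      = (Fintype.card K : ℝ) ^ Fintype.card n
        * ((Fintype.card K : ℝ) - 1) ^ Fintype.card ι := by
  set A : Matrix ι n K := Matrix.of fun i => (x i).rep
  have hA : LinearIndependent K A.row := independent_iff.1 hx
  have hsum := sum_eq_nsmul_sum_rep (K := K)
    (fun u : n → K => if ∀ i, (x i).rep ⬝ᵥ u ≠ 0 then (1 : ℝ) else 0) (by simp)
    (fun c u hc => by simp [dotProduct_smul, hc])
  have hK : 1 ≤ Fintype.card K := Fintype.card_pos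
  rw [sum_boole, nsmul_eq_mul, Nat.cast_sub hK, Nat.cast_one] at hsum
  have hcount :
      (#{u | ∀ i, (x i).rep ⬝ᵥ u ≠ 0} : ℝ) * (Fintype.card K : ℝ) ^ Fintype.card ι
        = (Fintype.card K : ℝ) ^ Fintype.card n
          * ((Fintype.card K : ℝ) - 1) ^ Fintype.card ι := by
    exact_mod_cast Matrix.card_filter_forall_mulVec_ne_zero_mul_pow hA
  rw [← hcount, hsum]
  ring

theorem Matrix.posDef_one_add_smul_vecMulVec_one {n : Type*} [Fintype n] [DecidableEq n]
    {t : ℝ} (ht : 0 ≤ t) : (1 + t • vecMulVec (1 : n → ℝ) 1).PosDef := by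
  have hJ : (vecMulVec (1 : n → ℝ) 1).PosSemidef := by
    simpa using posSemidef_vecMulVec_self_star (1 : n → ℝ)
  exact PosDef.one.add_posSemidef (hJ.smul ht)

section Mkq

open Matrix Projectivization

variable (F : Type) [Field F] [Fintype F] [DecidableEq F] (k : ℕ)

theorem Mkq_mul_transpose_apply (v w : ℙ F (Fin k → F)) :
    (Mkq F k * (Mkq F k)ᵀ) v w
      = ∑ p : ℙ F (Fin k → F),
          if v.rep ⬝ᵥ p.rep ≠ 0 ∧ w.rep ⬝ᵥ p.rep ≠ 0 then 1 else 0 := by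
  simp only [mul_apply, transpose_apply, Mkq, of_apply]
  refine sum_congr rfl fun p _ => ?_
  split_ifs <;> simp_all

theorem Mkq_mul_transpose_apply_self (v : ℙ F (Fin k → F)) :
    (Fintype.card F : ℝ) * (Mkq F k * (Mkq F k)ᵀ) v v = (Fintype.card F : ℝ) ^ k := by
  have hx : Independent ![v] := by
    rw [independent_iff, linearIndependent_unique_iff]
    exact v.rep_nonzero
  have h := sum_ite_forall_dotProduct_rep_ne_zero hx
  have hq : (Fintype.card F : ℝ) - 1 ≠ 0 :=
    sub_ne_zero.2 (Nat.one_lt_cast.2 Fintype.one_lt_card).ne'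
  simp only [Fintype.card_fin, Fin.forall_fin_one, pow_one, cons_val_zero] at h
  rw [Mkq_mul_transpose_apply]
  simp only [and_self]
  exact mul_left_cancel₀ hq (by linear_combination h)

theorem Mkq_mul_transpose_apply_of_ne {v w : ℙ F (Fin k → F)} (hvw : v ≠ w) :
    (Fintype.card F : ℝ) ^ 2 * (Mkq F k * (Mkq F k)ᵀ) v w
      = (Fintype.card F : ℝ) ^ k * ((Fintype.card F : ℝ) - 1) := by
  have h := sum_ite_forall_dotProduct_rep_ne_zero ((independent_pair_iff_ne v w).2 hvw)
  have hq : (Fintype.card F : ℝ) - 1 ≠ 0 :=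
    sub_ne_zero.2 (Nat.one_lt_cast.2 Fintype.one_lt_card).ne'
  simp only [Fintype.card_fin, Fin.forall_fin_two, cons_val_zero, cons_val_one] at h
  rw [Mkq_mul_transpose_apply]
  exact mul_left_cancel₀ hq (by linear_combination h)

theorem Mkq_mul_transpose :
    (Fintype.card F : ℝ) ^ 2 • (Mkq F k * (Mkq F k)ᵀ)
      = (Fintype.card F : ℝ) ^ k • (1 + ((Fintype.card F : ℝ) - 1) • vecMulVec 1 1) := by
  ext v w
  simp only [Matrix.smul_apply, Matrix.add_apply, vecMulVec_apply, smul_eq_mul, Pi.one_apply,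
    mul_one]
  rcases eq_or_ne v w with rfl | hvw
  · rw [one_apply_eq]
    linear_combination (Fintype.card F : ℝ) * Mkq_mul_transpose_apply_self F k v
  · rw [one_apply_ne hvw, Mkq_mul_transpose_apply_of_ne F k hvw]
    ring

end Mkq

theorem stmt_5_general (k : ℕ)
    (F : Type) [Field F] [Fintype F] [DecidableEq F] :
    IsUnit (Mkq F k) := by
  have hq : (1 : ℝ) < Fintype.card F := Nat.one_lt_cast.2 Fintype.one_lt_card
  have hunit : IsUnit ((Fintype.card F : ℝ) ^ 2 • (Mkq F k * (Mkq F k)ᵀ)) := by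
    rw [Mkq_mul_transpose]
    exact ((posDef_one_add_smul_vecMulVec_one (sub_nonneg.2 hq.le)).smul
      (pow_pos (zero_lt_one.trans hq) k)).isUnit
  rw [← Matrix.mul_smul] at hunit
  exact isUnit_of_mul_isUnit_left hunit

/-- the real matrix `M_{k,q}` is invertible. -/
theorem stmt_5 (q k : ℕ) (hq : IsPrimePow q) (hk : 0 < k)
    (F : Type) [Field F] [Fintype F] [DecidableEq F] (hF : Fintype.card F = q) :
    IsUnit (Mkq F k) :=
  stmt_5_general k F
end

section
/- Let k be a positive integer, q a prime power, and c a positive integer. The multiset S consisting of (q^k − 1)/(q − 1) copies of c is q-projection-forcing; in particular its split difference satisfies δ_q(S) = c > −q^{k−1}. -/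
open Matrix

/-!
Write the coordinates of `U` and of `φ` as linear functionals `f j` and `g i` on `U`, so that the
weight change at `u` is `#{j | f j u ≠ 0} - #{i | g i u ≠ 0}`. A nonzero functional on a space of
size `N` vanishes on exactly `N / q` vectors, so summing the constant weight change `c` over a
subspace `W` of size `N` gives `q c (N - 1) = (q - 1) N (a_W - b_W)`, where `a_W` and `b_W` count
the `f j` and the `g i` that do not vanish on `W`.
Comparing `W = U` with a hyperplane `W = ker h` shows that the `f j` with kernel `ker h` outnumber
the `g i` with kernel `ker h`, by exactly `c / |ker h| > 0`. Hence the nonzero `g i` can be matched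
injectively with `f j` having the same kernel, i.e. with proportional `f j`, and this matching is a
matrix with at most one nonzero entry in each row and each column.
-/

open Module LinearMap Finset

theorem Function.Embedding.exists_of_card_fiber_le {α β γ : Type*} [Fintype α] [Fintype β]
    [DecidableEq γ] (p : α → γ) (r : β → γ)
    (h : ∀ c, Fintype.card {a // p a = c} ≤ Fintype.card {b // r b = c}) :
    ∃ σ : α ↪ β, ∀ a, r (σ a) = p a := by
  let e c : {a // p a = c} ↪ {b // r b = c} := (nonempty_of_card_le (h c)).some
  exact ⟨((Equiv.sigmaFiberEquiv p).symm.toEmbedding.trans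
    ((Function.Embedding.refl γ).sigmaMap e)).trans (Equiv.sigmaFiberEquiv r).toEmbedding,
    fun a => (e (p a) ⟨a, rfl⟩).2⟩

section WeightChange

variable {F V : Type*} [Field F] [AddCommGroup V] [Module F V]

theorem LinearMap.card_ker_mul_card_eq [Finite V] {e : V →ₗ[F] F} (he : e ≠ 0) :
    Nat.card (ker e) * Nat.card F = Nat.card V := by
  rw [(ker e).card_eq_card_quotient_mul_card,
    Nat.card_congr (e.quotKerEquivOfSurjective (surjective_of_ne_zero he)).toEquiv]

variable [DecidableEq F] [Fintype V] {ι κ : Type*} [Fintype ι] [Fintype κ]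

def weightChange (f : ι → V →ₗ[F] F) (g : κ → V →ₗ[F] F) (v : V) : ℤ :=
  #{j | f j v ≠ 0} - #{i | g i v ≠ 0}

open scoped Classical in
theorem card_ne_zero_eq_card_comp_subtype_ne_zero_add (f : ι → V →ₗ[F] F) (K : Submodule F V) :
    #{j | f j ≠ 0} = #{j | f j ∘ₗ K.subtype ≠ 0} + #{j | f j ≠ 0 ∧ K ≤ ker (f j)} := by
  rw [← card_filter_add_card_filter_not (s := {j | f j ≠ 0}) (fun j => K ≤ ker (f j)),
    filter_filter, filter_filter, add_comm]
  congr 2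
  ext j
  simp only [mem_filter, mem_univ, true_and, ne_eq, ← le_ker_iff_comp_subtype_eq_zero]
  refine ⟨And.right, fun hK => ⟨fun hj => hK ?_, hK⟩⟩
  simp [hj]

open scoped Classical in
theorem card_le_ker_eq_card_ker_eq (f : ι → V →ₗ[F] F) {h : V →ₗ[F] F} (hh : h ≠ 0) :
    #{j | f j ≠ 0 ∧ ker h ≤ ker (f j)} =
      Fintype.card {j : {j // f j ≠ 0} // ker (f j) = ker h} := by
  rw [Fintype.card_congr (Equiv.subtypeSubtypeEquivSubtypeInter (fun j => f j ≠ 0)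
    fun j => ker (f j) = ker h), Fintype.card_subtype]
  refine congrArg card (filter_congr fun j _ => and_congr_right fun hj => ?_)
  rw [(isCoatom_ker_of_surjective (surjective_of_ne_zero hh)).le_iff, ker_eq_top]
  simp [hj]

variable [Fintype F]

theorem LinearMap.card_mul_card_apply_ne_zero (e : V →ₗ[F] F) :
    (Fintype.card F : ℤ) * #{v | e v ≠ 0} =
      if e = 0 then 0 else ((Fintype.card F : ℤ) - 1) * Fintype.card V := by
  split_ifs with he
  · simp [he]
  have hker : #{v | e v = 0} = Nat.card (ker e) := by
    rw [← Fintype.card_subtype, ← Nat.card_eq_fintype_card]; rfl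
  have hcard := e.card_ker_mul_card_eq he
  rw [Nat.card_eq_fintype_card (α := F), Nat.card_eq_fintype_card (α := V)] at hcard
  have hsplit := card_filter_add_card_filter_not (s := univ) (fun v => e v = 0)
  rw [hker, card_univ, ← hcard] at hsplit
  rw [← hcard]; push_cast
  zify at hsplit
  linear_combination (Fintype.card F : ℤ) * hsplit

theorem card_mul_sum_card_apply_ne_zero (f : ι → V →ₗ[F] F) :
    (Fintype.card F : ℤ) * ∑ v, (#{j | f j v ≠ 0} : ℤ) =
      ((Fintype.card F : ℤ) - 1) * Fintype.card V * #{j | f j ≠ 0} := by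
  simp only [card_filter, Nat.cast_sum, Nat.cast_ite, Nat.cast_one, Nat.cast_zero]
  rw [sum_comm, mul_sum, mul_sum]
  refine sum_congr rfl fun j _ => ?_
  have := (f j).card_mul_card_apply_ne_zero
  rw [card_filter] at this
  push_cast at this
  rw [this]; split_ifs <;> simp_all

theorem card_mul_sub_one_eq_of_weightChange_eq (f : ι → V →ₗ[F] F) (g : κ → V →ₗ[F] F) {c : ℤ}
    (hw : ∀ v ≠ 0, weightChange f g v = c) :
    (Fintype.card F : ℤ) * c * (Fintype.card V - 1) =
      ((Fintype.card F : ℤ) - 1) * Fintype.card V * (#{j | f j ≠ 0} - #{i | g i ≠ 0}) := by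
  have hsum : ∑ v, weightChange f g v = c * (Fintype.card V - 1) := by
    classical
    rw [← sum_erase_add _ _ (mem_univ 0), sum_congr rfl fun v hv => hw v (ne_of_mem_erase hv),
      sum_const, card_erase_of_mem (mem_univ 0), card_univ]
    simp [weightChange, Nat.cast_sub Fintype.card_pos, mul_comm]
  simp only [weightChange, sum_sub_distrib] at hsum
  linear_combination -(Fintype.card F : ℤ) * hsum + card_mul_sum_card_apply_ne_zero f -
    card_mul_sum_card_apply_ne_zero g

open scoped Classical in
theorem card_ker_le_ker_lt_of_weightChange_eq (f : ι → V →ₗ[F] F) (g : κ → V →ₗ[F] F) {c : ℤ}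
    (hc : 0 < c) (hw : ∀ v ≠ 0, weightChange f g v = c) {h : V →ₗ[F] F} (hh : h ≠ 0) :
    #{i | g i ≠ 0 ∧ ker h ≤ ker (g i)} < #{j | f j ≠ 0 ∧ ker h ≤ ker (f j)} := by
  set K := ker h
  have hV := card_mul_sub_one_eq_of_weightChange_eq f g hw
  have hK := card_mul_sub_one_eq_of_weightChange_eq (fun j => f j ∘ₗ K.subtype)
    (fun i => g i ∘ₗ K.subtype) fun v hv => hw v (by simpa using hv)
  have hcard := h.card_ker_mul_card_eq hh
  rw [Nat.card_eq_fintype_card, Nat.card_eq_fintype_card, Nat.card_eq_fintype_card] at hcard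
  rw [card_ne_zero_eq_card_comp_subtype_ne_zero_add f K,
    card_ne_zero_eq_card_comp_subtype_ne_zero_add g K, ← hcard] at hV
  have hq : (Fintype.card F : ℤ) * (Fintype.card F - 1) ≠ 0 := by
    have : (1 : ℤ) < Fintype.card F := by exact_mod_cast Fintype.one_lt_card
    positivity
  have key : c = Fintype.card K * ((#{j | f j ≠ 0 ∧ K ≤ ker (f j)} : ℤ) -
      #{i | g i ≠ 0 ∧ K ≤ ker (g i)}) := by
    refine mul_left_cancel₀ hq ?_
    push_cast at hV
    linear_combination hV - (Fintype.card F : ℤ) * hK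
  rw [key] at hc
  exact_mod_cast sub_pos.mp (pos_of_mul_pos_right hc (Nat.cast_nonneg _))

theorem exists_partialMonomial_matrix_of_weightChange_eq (f : ι → V →ₗ[F] F)
    (g : κ → V →ₗ[F] F) {c : ℤ} (hc : 0 < c) (hw : ∀ v ≠ 0, weightChange f g v = c) :
    ∃ M : Matrix κ ι F, (∀ v, M *ᵥ (fun j => f j v) = fun i => g i v) ∧
      (∀ i j j', M i j ≠ 0 → M i j' ≠ 0 → j = j') ∧
      (∀ i i' j, M i j ≠ 0 → M i' j ≠ 0 → i = i') := by
  classical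
  obtain ⟨σ, hσ⟩ := Function.Embedding.exists_of_card_fiber_le
    (fun i : {i // g i ≠ 0} => ker (g i)) (fun j : {j // f j ≠ 0} => ker (f j)) fun W => by
      rcases isEmpty_or_nonempty {i : {i // g i ≠ 0} // ker (g i) = W} with hW | ⟨⟨i, rfl⟩⟩
      · simp
      · rw [← card_le_ker_eq_card_ker_eq g i.2, ← card_le_ker_eq_card_ker_eq f i.2]
        exact (card_ker_le_ker_lt_of_weightChange_eq f g hc hw i.2).le
  have ht (i : {i // g i ≠ 0}) : ∃ t : F, t • f (σ i) = g i :=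
    Submodule.mem_span_singleton.mp <| by
      simpa using mem_span_of_iInf_ker_le_ker (L := fun _ : Unit => f (σ i))
        ((iInf_le _ ()).trans (hσ i).le)
  choose t ht using ht
  let M : Matrix κ ι F := fun i j =>
    if hi : g i = 0 then 0 else if (σ ⟨i, hi⟩ : ι) = j then t ⟨i, hi⟩ else 0
  have hM (i j) (hij : M i j ≠ 0) : ∃ hi : g i ≠ 0, (σ ⟨i, hi⟩ : ι) = j := by
    simp only [M] at hij
    split_ifs at hij with hi hj
    · exact absurd rfl hij
    · exact ⟨hi, hj⟩
    · exact absurd rfl hij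
  refine ⟨M, fun v => ?_, fun i j j' h1 h2 => ?_, fun i i' j h1 h2 => ?_⟩
  · ext i
    by_cases hi : g i = 0
    · simp [M, hi, Matrix.mulVec, dotProduct]
    · simp only [Matrix.mulVec, dotProduct, M, dif_neg hi, ite_mul, zero_mul, sum_ite_eq,
        mem_univ, if_true, ← ht ⟨i, hi⟩]
      rfl
  · obtain ⟨_, rfl⟩ := hM i j h1
    obtain ⟨_, rfl⟩ := hM i j' h2
    rfl
  · obtain ⟨hi, rfl⟩ := hM i j h1
    obtain ⟨hi', h⟩ := hM i' _ h2
    exact congrArg Subtype.val (σ.injective (Subtype.ext h)).symm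

end WeightChange

section Codes

variable {F : Type} [Field F] [Fintype F] [DecidableEq F] {n m : ℕ}
  {U : Submodule F (Fin n → F)} {V : Submodule F (Fin m → F)}

theorem isProjection_of_weightChange_eq (φ : U →ₗ[F] V) {c : ℤ} (hc : 0 < c)
    (hw : ∀ u : U, u ≠ 0 →
      (hammingNorm (u : Fin n → F) : ℤ) - hammingNorm ((φ u : V) : Fin m → F) = c) :
    IsProjection φ := by
  classical
  obtain ⟨M, hM, hrow, hcol⟩ := exists_partialMonomial_matrix_of_weightChange_eq
    (fun j => proj (R := F) (φ := fun _ => F) j ∘ₗ U.subtype)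
    (fun i => proj (R := F) (φ := fun _ => F) i ∘ₗ V.subtype ∘ₗ φ) hc hw
  exact ⟨M, fun u => (hM u).symm, hrow, hcol⟩

theorem weightChange_eq_of_projWeightChanges_eq_replicate {φ : U →ₗ[F] V} {N : ℕ} {c : ℤ}
    (hS : projWeightChanges φ = Multiset.replicate N c) (u : U) (hu : u ≠ 0) :
    (hammingNorm (u : Fin n → F) : ℤ) - hammingNorm ((φ u : V) : Fin m → F) = c := by
  obtain ⟨a, ha⟩ := Projectivization.exists_smul_eq_mk_rep F u hu
  have hreg : IsSMulRegular F (a : F) :=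
    IsLeftRegular.isSMulRegular (mul_right_injective₀ a.ne_zero)
  have hmem := Multiset.mem_map_of_mem (f := fun p : Projectivization F U =>
      (hammingNorm (p.rep : Fin n → F) : ℤ) - hammingNorm ((φ p.rep : V) : Fin m → F))
    (Finset.mem_val.mpr (Finset.mem_univ (Projectivization.mk F u hu)))
  rw [← projWeightChanges, hS] at hmem
  rw [← Multiset.eq_of_mem_replicate hmem, ← ha]
  simp [Units.smul_def, hammingNorm_smul fun _ => hreg]

end Codes

theorem splitDiff_replicate {q k N : ℕ} (a : ℤ) (h : q ^ (k - 1) ≤ N) :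
    splitDiff q k (Multiset.replicate N a) =
      (q ^ (k - 1) - ((q : ℤ) - 1) * (N - q ^ (k - 1) : ℕ)) * a := by
  have hsort : (Multiset.replicate N a).sort (· ≤ ·) = List.replicate N a :=
    List.eq_replicate_iff.mpr
      ⟨by simp, fun b hb => Multiset.eq_of_mem_replicate (by simpa using hb)⟩
  rw [splitDiff, hsort, List.take_replicate, List.drop_replicate, min_eq_left h,
    List.sum_replicate, List.sum_replicate, nsmul_eq_mul, nsmul_eq_mul]
  push_cast
  ring

theorem splitDiff_replicate_geomSum {q : ℕ} (hq : 2 ≤ q) (K : ℕ) (a : ℤ) :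
    splitDiff q (K + 1) (Multiset.replicate ((q ^ (K + 1) - 1) / (q - 1)) a) = a := by
  rw [← Nat.geomSum_eq hq, splitDiff_replicate a (by simp [sum_range_succ]),
    add_tsub_cancel_right, sum_range_succ, add_tsub_cancel_right]
  push_cast
  linear_combination (-a) * geom_sum_mul (q : ℤ) K

/-- the multiset consisting of `(q^k - 1)/(q - 1)` copies of a positive
integer `c` is q-projection-forcing; its split difference is `c > -q^(k-1)`. -/
theorem stmt_6 (q k : ℕ) (hq : IsPrimePow q) (hk : 0 < k) (c : ℕ) (hc : 0 < c) :
    ProjectionForcing q (Multiset.replicate ((q ^ k - 1) / (q - 1)) (c : ℤ)) ∧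
      splitDiff q k (Multiset.replicate ((q ^ k - 1) / (q - 1)) (c : ℤ)) = (c : ℤ) ∧
      (c : ℤ) > -(q : ℤ) ^ (k - 1) := by
  obtain ⟨K, rfl⟩ : ∃ K, k = K + 1 := ⟨k - 1, by omega⟩
  have hc' : (0 : ℤ) < c := by exact_mod_cast hc
  refine ⟨fun F _ _ _ _ n m U V φ hS => ?_, splitDiff_replicate_geomSum hq.two_le K c, ?_⟩
  · exact isProjection_of_weightChange_eq φ hc'
      (weightChange_eq_of_projWeightChanges_eq_replicate hS)
  · have : (0 : ℤ) < (q : ℤ) ^ (K + 1 - 1) := by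
      have := hq.pos
      positivity
    linarith
end

section
/- Let a and b be nonnegative integers and let k ≥ 2. Let S be the multiset consisting of 2^k − 2 copies of a and one copy of b, and suppose S is realized by some F_2-linear map between binary linear codes. Then the following are equivalent: (1) S is 2-projection-forcing; (2) b ≤ 2a; (3) b < 2a + 2^{k−1}. -/
open Matrix

/-!
Over `F₂`, the weight of `u ∈ U` counts the coordinate functionals of `U` that do not vanish at
`u`, and the weight of `φ u` those of `φ(U)`, pulled back to `U`. Hence the weight change is
`δ(u) = ∑_{f ≠ 0} D(f) [f u ≠ 0]`, where `D(f)` is the number of input coordinates equal to `f`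
minus the number of output coordinates equal to `f`. Orthogonality of the characters
`u ↦ (-1)^(f u)` inverts this: `|U| D(f) = -2 ∑_u δ(u) (-1)^(f u)`.

If `δ` takes the value `b` at one nonzero `u₀` and `a` at the other `2^k - 2` nonzero vectors,
this gives `2^(k-1) D(f) = b` when `f u₀ ≠ 0` and `2^(k-1) D(f) = 2a - b` when `f u₀ = 0`; the
second case occurs for some `f ≠ 0` because `k ≥ 2`. A map is a projection exactly when
`D(f) ≥ 0` for every `f ≠ 0` (match equal coordinates injectively), so it is a projection iff
`b ≤ 2a`, independently of the map. Finally `2^(k-1) ∣ 2a - b`, so `b < 2a + 2^(k-1)` already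
forces `b ≤ 2a`.
-/

namespace WeightChange

open Finset

theorem exists_injective_comp_eq_of_card_fiber_le {α β γ : Type*} [Finite α] [Finite β]
    {p : α → γ} {q : β → γ} (h : ∀ c, Nat.card {a // p a = c} ≤ Nat.card {b // q b = c}) :
    ∃ σ : α → β, σ.Injective ∧ ∀ a, q (σ a) = p a := by
  classical
  have := Fintype.ofFinite α
  have := Fintype.ofFinite β
  have e : ∀ c, {a // p a = c} ↪ {b // q b = c} := fun c =>
    (Function.Embedding.nonempty_of_card_le
      (by simpa only [Nat.card_eq_fintype_card] using h c)).some
  refine ⟨Equiv.sigmaFiberEquiv q ∘ Sigma.map id (fun c => e c) ∘ (Equiv.sigmaFiberEquiv p).symm,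
    ?_, fun a => (e (p a) ⟨a, rfl⟩).2⟩
  exact (Equiv.injective _).comp
    ((Function.Injective.sigma_map Function.injective_id fun c => (e c).injective).comp
      (Equiv.injective _))

theorem exists_ne_zero_apply_eq_zero {K W : Type*} [Field K] [Finite K] [AddCommGroup W]
    [Module K W] (hW : Nat.card K < Nat.card W) (w : W) : ∃ f : W →ₗ[K] K, f ≠ 0 ∧ f w = 0 := by
  have hlt : K ∙ w < ⊤ := by
    refine lt_top_iff_ne_top.mpr fun htop => hW.not_ge (Nat.card_le_card_of_surjective
      (fun c : K => c • w) fun v => ?_)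
    exact Submodule.mem_span_singleton.mp (htop ▸ Submodule.mem_top)
  obtain ⟨f, hf, hker⟩ := (K ∙ w).exists_le_ker_of_lt_top hlt
  exact ⟨f, hf, hker (Submodule.mem_span_singleton_self w)⟩

theorem exists_forall_ne_eq_of_map_univ_eq {α β : Type*} [Fintype α] {g : α → β} {N : ℕ}
    {a b : β} (h : univ.val.map g = Multiset.replicate N a + {b}) :
    ∃ x₀, g x₀ = b ∧ ∀ x ≠ x₀, g x = a := by
  classical
  obtain ⟨x₀, -, hx₀⟩ := Multiset.mem_map.mp (h ▸ by simp : b ∈ univ.val.map g)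
  refine ⟨x₀, hx₀, fun x hx => ?_⟩
  rw [← Multiset.cons_erase (mem_univ_val x₀), Multiset.map_cons, hx₀, add_comm,
    Multiset.singleton_add, Multiset.cons_inj_right] at h
  exact Multiset.eq_of_mem_replicate
    (h ▸ Multiset.mem_map_of_mem g ((Multiset.mem_erase_of_ne hx).mpr (mem_univ_val x)))

theorem le_iff_lt_add_of_dvd_sub {x y d : ℤ} (hd : 0 < d) (h : d ∣ x - y) :
    y ≤ x ↔ y < x + d := by
  refine ⟨fun hle => by linarith, fun hlt => ?_⟩
  obtain ⟨c, hc⟩ := h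
  have : 0 ≤ c := by
    by_contra! hneg
    nlinarith
  nlinarith

section FieldOfTwoElements

variable {F : Type*} [Field F] [Fintype F]

theorem eq_one_of_ne_zero (hF : Fintype.card F = 2) {x : F} (hx : x ≠ 0) : x = 1 := by
  classical
  have : Fintype.card Fˣ ≤ 1 := by rw [Fintype.card_units, hF]
  simpa using congrArg Units.val (Fintype.card_le_one_iff.mp this (Units.mk0 x hx) 1)

theorem rep_mk_of_card_eq_two {W : Type*} [AddCommGroup W] [Module F W]
    (hF : Fintype.card F = 2) {w : W} (hw : w ≠ 0) : (Projectivization.mk F w hw).rep = w := by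
  classical
  obtain ⟨a, ha⟩ := Projectivization.exists_smul_eq_mk_rep F w hw
  rw [← ha, Units.smul_def, eq_one_of_ne_zero hF a.ne_zero, one_smul]

end FieldOfTwoElements

section BinaryField

variable {F : Type*} [Field F] [DecidableEq F]

/-- The character `x ↦ (-1)^x` of `F₂`, written so as to make sense in any field. -/
def binarySign (x : F) : ℤ := if x = 0 then 1 else -1

theorem binarySign_neg (x : F) : binarySign (-x) = binarySign x := by
  simp [binarySign]

theorem two_mul_hammingNorm {ι : Type*} [Fintype ι] (x : ι → F) :
    2 * (hammingNorm x : ℤ) = Fintype.card ι - ∑ i, binarySign (x i) := by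
  rw [hammingNorm, card_filter, eq_sub_iff_add_eq, Nat.cast_sum, mul_sum, ← sum_add_distrib]
  simp only [binarySign]
  rw [Fintype.card_eq_sum_ones, Nat.cast_sum]
  exact sum_congr rfl fun i _ => by split_ifs <;> simp_all

variable [Fintype F]

theorem binarySign_add (hF : Fintype.card F = 2) (x y : F) :
    binarySign (x + y) = binarySign x * binarySign y := by
  have h2 : (2 : F) = 0 := by simpa [hF] using FiniteField.cast_card_eq_zero F
  by_cases hx : x = 0 <;> by_cases hy : y = 0
  all_goals simp_all [binarySign, eq_one_of_ne_zero hF, one_add_one_eq_two]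

theorem binarySign_sub (hF : Fintype.card F = 2) (x y : F) :
    binarySign (x - y) = binarySign x * binarySign y := by
  rw [sub_eq_add_neg, binarySign_add hF, binarySign_neg]

variable {M : Type*} [AddCommGroup M] [Module F M] [Fintype M]

theorem sum_binarySign_apply (hF : Fintype.card F = 2) (g : M →ₗ[F] F) :
    ∑ u, binarySign (g u) = if g = 0 then (Fintype.card M : ℤ) else 0 := by
  split_ifs with hg
  · simp [hg, binarySign]
  obtain ⟨u₁, hu₁⟩ : ∃ u₁, g u₁ ≠ 0 := by
    by_contra! h
    exact hg (LinearMap.ext h)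
  have hflip : ∑ u, binarySign (g u) = -∑ u, binarySign (g u) := calc
    ∑ u, binarySign (g u) = ∑ u, binarySign (g (u + u₁)) :=
      (Equiv.sum_comp (Equiv.addRight u₁) _).symm
    _ = -∑ u, binarySign (g u) := by
      have : binarySign (g u₁) = -1 := if_neg hu₁
      simp only [map_add, binarySign_add hF, this, mul_neg_one, sum_neg_distrib]
  linarith

theorem sum_binarySign_mul_binarySign (hF : Fintype.card F = 2) (g h : M →ₗ[F] F) :
    ∑ u, binarySign (g u) * binarySign (h u) = if g = h then (Fintype.card M : ℤ) else 0 := by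
  simp_rw [← binarySign_sub hF, ← LinearMap.sub_apply, sum_binarySign_apply hF, sub_eq_zero]

end BinaryField

section CoordinateFunctionals

variable {F : Type*} [Field F] [Fintype F] [DecidableEq F]
  {M : Type*} [AddCommGroup M] [Module F M] [Fintype M] {ι : Type*} [Fintype ι]

noncomputable def coordCount (ψ : M →ₗ[F] ι → F) (f : M →ₗ[F] F) : ℕ :=
  Nat.card {i // LinearMap.proj i ∘ₗ ψ = f}

theorem sum_two_mul_hammingNorm_mul_binarySign (hF : Fintype.card F = 2) (ψ : M →ₗ[F] ι → F)
    {f : M →ₗ[F] F} (hf : f ≠ 0) :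
    ∑ u, 2 * (hammingNorm (ψ u) : ℤ) * binarySign (f u) =
      -(Fintype.card M * coordCount ψ f : ℤ) := by
  classical
  calc ∑ u, 2 * (hammingNorm (ψ u) : ℤ) * binarySign (f u)
      = Fintype.card ι * ∑ u, binarySign (f u) -
          ∑ i, ∑ u, binarySign ((LinearMap.proj i ∘ₗ ψ) u) * binarySign (f u) := by
        simp only [two_mul_hammingNorm, sub_mul, sum_sub_distrib, mul_sum, sum_mul]
        rw [sum_comm]
        rfl
    _ = -∑ i, if LinearMap.proj i ∘ₗ ψ = f then (Fintype.card M : ℤ) else 0 := by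
        simp only [sum_binarySign_mul_binarySign hF, sum_binarySign_apply hF, hf, if_false,
          mul_zero, zero_sub]
    _ = -(Fintype.card M * coordCount ψ f : ℤ) := by
        rw [sum_ite, sum_const_zero, add_zero, sum_const, coordCount, Nat.card_eq_fintype_card,
          Fintype.card_subtype, nsmul_eq_mul, mul_comm]

end CoordinateFunctionals

section LinearMapsOfCodes

variable {F : Type} [Field F] [DecidableEq F] {n m : ℕ}
  {U : Submodule F (Fin n → F)} {V : Submodule F (Fin m → F)}

def weightChange (φ : U →ₗ[F] V) (u : U) : ℤ :=
  hammingNorm (u : Fin n → F) - hammingNorm ((φ u : V) : Fin m → F)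

noncomputable def coordDiff (φ : U →ₗ[F] V) (f : U →ₗ[F] F) : ℤ :=
  coordCount U.subtype f - coordCount (V.subtype ∘ₗ φ) f

theorem card_mul_coordDiff [Fintype F] [Fintype U] (hF : Fintype.card F = 2) (φ : U →ₗ[F] V)
    {f : U →ₗ[F] F} (hf : f ≠ 0) :
    Fintype.card U * coordDiff φ f = -2 * ∑ u, weightChange φ u * binarySign (f u) := by
  have hin := sum_two_mul_hammingNorm_mul_binarySign hF U.subtype hf
  have hout := sum_two_mul_hammingNorm_mul_binarySign hF (V.subtype ∘ₗ φ) hf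
  simp only [Submodule.subtype_apply, LinearMap.comp_apply] at hin hout
  have hsplit : -2 * ∑ u, weightChange φ u * binarySign (f u) =
      ∑ u, 2 * (hammingNorm ((φ u : V) : Fin m → F) : ℤ) * binarySign (f u) -
        ∑ u : U, 2 * (hammingNorm (u : Fin n → F) : ℤ) * binarySign (f u) := by
    rw [mul_sum, ← sum_sub_distrib]
    exact sum_congr rfl fun u _ => by rw [weightChange]; ring
  rw [hsplit, hin, hout, coordDiff]
  ring

theorem weightChange_zero (φ : U →ₗ[F] V) : weightChange φ 0 = 0 := by
  simp [weightChange]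

theorem coordCount_le_of_isProjection [Fintype F] (hF : Fintype.card F = 2) {φ : U →ₗ[F] V}
    (hφ : IsProjection φ) {f : U →ₗ[F] F} (hf : f ≠ 0) :
    coordCount (V.subtype ∘ₗ φ) f ≤ coordCount U.subtype f := by
  classical
  obtain ⟨M, hM, hrow, hcol⟩ := hφ
  have hcoord : ∀ j, LinearMap.proj j ∘ₗ V.subtype ∘ₗ φ =
      ∑ i, M j i • LinearMap.proj i ∘ₗ U.subtype := by
    intro j
    ext u
    simp [hM u, mulVec, dotProduct]
  have hsingle : ∀ j i, M j i ≠ 0 →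
      LinearMap.proj j ∘ₗ V.subtype ∘ₗ φ = LinearMap.proj i ∘ₗ U.subtype := by
    intro j i hji
    rw [hcoord, sum_eq_single i, eq_one_of_ne_zero hF hji, one_smul]
    · intro i' _ hi'
      rw [not_imp_comm.mp (hrow j i' i · hji) hi', zero_smul]
    · simp
  have hrow_ne : ∀ j, LinearMap.proj j ∘ₗ V.subtype ∘ₗ φ ≠ 0 → ∃ i, M j i ≠ 0 := by
    intro j hj
    by_contra! hzero
    exact hj (by simp [hcoord, hzero])
  simp only [coordCount, Nat.card_eq_fintype_card, Fintype.card_subtype]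
  refine card_le_card_of_forall_subsingleton (fun j i => M j i ≠ 0) ?_ ?_
  · intro j hj
    rw [mem_filter] at hj
    obtain ⟨i, hi⟩ := hrow_ne j (hj.2 ▸ hf)
    exact ⟨i, mem_filter.mpr ⟨mem_univ _, (hsingle j i hi) ▸ hj.2⟩, hi⟩
  · intro i _ j hj j' hj'
    exact hcol j j' i hj.2 hj'.2

theorem isProjection_of_coordCount_le [Fintype F] {φ : U →ₗ[F] V}
    (h : ∀ f ≠ 0, coordCount (V.subtype ∘ₗ φ) f ≤ coordCount U.subtype f) :
    IsProjection φ := by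
  classical
  -- match the nonzero output coordinates injectively with equal input coordinates
  obtain ⟨σ, hσ, hσout⟩ := exists_injective_comp_eq_of_card_fiber_le
    (p := fun j : {j // LinearMap.proj j ∘ₗ V.subtype ∘ₗ φ ≠ 0} =>
      LinearMap.proj j.1 ∘ₗ V.subtype ∘ₗ φ)
    (q := fun i => LinearMap.proj i ∘ₗ U.subtype)
    (fun f => by
      by_cases hf : f = 0
      · have : IsEmpty {j : {j // LinearMap.proj j ∘ₗ V.subtype ∘ₗ φ ≠ 0} //
            LinearMap.proj j.1 ∘ₗ V.subtype ∘ₗ φ = f} := ⟨fun j => j.1.2 (hf ▸ j.2)⟩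
        rw [Nat.card_of_isEmpty]
        exact Nat.zero_le _
      · exact (Nat.card_congr (Equiv.subtypeSubtypeEquivSubtype fun hj => hj ▸ hf)).trans_le
          (h f hf))
  let M : Matrix (Fin m) (Fin n) F := Matrix.of fun j i =>
    if hj : LinearMap.proj j ∘ₗ V.subtype ∘ₗ φ = 0 then 0 else if σ ⟨j, hj⟩ = i then 1 else 0
  have hentry : ∀ {j i}, M j i ≠ 0 → ∃ hj, σ ⟨j, hj⟩ = i := by
    intro j i
    simp only [M, Matrix.of_apply]
    split_ifs with hj hi <;> simp_all
  refine ⟨M, fun u => ?_, fun j i i' hi hi' => ?_, fun j j' i hj hj' => ?_⟩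
  · ext j
    by_cases hj : LinearMap.proj j ∘ₗ V.subtype ∘ₗ φ = 0
    · have hzero : (φ u : Fin m → F) j = 0 := LinearMap.congr_fun hj u
      simp [M, mulVec, dotProduct, hj, hzero]
    · have hσj : (u : Fin n → F) (σ ⟨j, hj⟩) = (φ u : Fin m → F) j :=
        LinearMap.congr_fun (hσout ⟨j, hj⟩) u
      simp [M, mulVec, dotProduct, hj, hσj]
  · obtain ⟨_, rfl⟩ := hentry hi
    obtain ⟨_, rfl⟩ := hentry hi'
    rfl
  · obtain ⟨_, hσj⟩ := hentry hj
    obtain ⟨_, hσj'⟩ := hentry hj'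
    exact congrArg Subtype.val (hσ (hσj.trans hσj'.symm))

theorem isProjection_iff_forall_coordDiff_nonneg [Fintype F] (hF : Fintype.card F = 2)
    (φ : U →ₗ[F] V) :
    IsProjection φ ↔ ∀ f ≠ 0, 0 ≤ coordDiff φ f := by
  simp only [coordDiff, sub_nonneg, Nat.cast_le]
  exact ⟨fun hφ _ hf => coordCount_le_of_isProjection hF hφ hf, isProjection_of_coordCount_le⟩

end LinearMapsOfCodes

section Realization

variable {F : Type} [Field F] [Fintype F] [DecidableEq F] {n m : ℕ}
  {U : Submodule F (Fin n → F)} {V : Submodule F (Fin m → F)}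

theorem card_eq_two_pow_of_projWeightChanges_eq (hF : Fintype.card F = 2) {k a b : ℕ}
    (hk : 1 ≤ k) (φ : U →ₗ[F] V)
    (hS : projWeightChanges φ = Multiset.replicate (2 ^ k - 2) (a : ℤ) + {(b : ℤ)}) :
    Nat.card U = 2 ^ k := by
  have hcard := congrArg Multiset.card hS
  simp only [projWeightChanges, Multiset.card_map, card_val, card_univ, Multiset.card_add,
    Multiset.card_replicate, Multiset.card_singleton, ← Nat.card_eq_fintype_card] at hcard
  have h2k : 2 ≤ 2 ^ k := Nat.le_self_pow (by omega) 2
  rw [Projectivization.card' F, hcard, Nat.card_eq_fintype_card, hF]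
  omega

theorem exists_weightChange_eq_of_projWeightChanges_eq (hF : Fintype.card F = 2) {k a b : ℕ}
    (φ : U →ₗ[F] V)
    (hS : projWeightChanges φ = Multiset.replicate (2 ^ k - 2) (a : ℤ) + {(b : ℤ)}) :
    ∃ u₀ : U, u₀ ≠ 0 ∧ weightChange φ u₀ = b ∧ ∀ u ≠ 0, u ≠ u₀ → weightChange φ u = a := by
  obtain ⟨p₀, hp₀, ha⟩ := exists_forall_ne_eq_of_map_univ_eq hS
  refine ⟨p₀.rep, p₀.rep_nonzero, hp₀, fun u hu hne => ?_⟩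
  rw [← rep_mk_of_card_eq_two hF hu]
  refine ha _ fun h => hne ?_
  rw [← h, rep_mk_of_card_eq_two hF hu]

theorem exists_two_pow_mul_coordDiff_eq (hF : Fintype.card F = 2) {k a b : ℕ} (hk : 1 ≤ k)
    (φ : U →ₗ[F] V)
    (hS : projWeightChanges φ = Multiset.replicate (2 ^ k - 2) (a : ℤ) + {(b : ℤ)}) :
    ∃ u₀ : U, ∀ f ≠ 0,
      2 ^ (k - 1) * coordDiff φ f = if f u₀ = 0 then 2 * (a : ℤ) - b else b := by
  classical
  have := Fintype.ofFinite U
  obtain ⟨u₀, hu₀, hb, ha⟩ := exists_weightChange_eq_of_projWeightChanges_eq hF φ hS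
  refine ⟨u₀, fun f hf => ?_⟩
  have hδ : ∀ u, weightChange φ u =
      a - (if u = 0 then (a : ℤ) else 0) + (if u = u₀ then (b : ℤ) - a else 0) := by
    intro u
    by_cases h0 : u = 0
    · simp [h0, hu₀.symm, weightChange_zero]
    by_cases h₀ : u = u₀
    · simp [h₀, hu₀, hb]
    · simp [h0, h₀, ha u h0 h₀]
  have hsum : ∑ u, weightChange φ u * binarySign (f u) = (b - a) * binarySign (f u₀) - a := by
    simp only [hδ, add_mul, sub_mul, sum_add_distrib, sum_sub_distrib, ite_mul, zero_mul,
      sum_ite_eq', mem_univ, if_true, ← mul_sum, sum_binarySign_apply hF, if_neg hf, map_zero]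
    rw [show binarySign (0 : F) = 1 from if_pos rfl]
    ring
  have hcard := card_mul_coordDiff hF φ hf
  rw [Fintype.card_eq_nat_card, card_eq_two_pow_of_projWeightChanges_eq hF hk φ hS, hsum,
    show k = k - 1 + 1 by omega, pow_succ] at hcard
  split_ifs with h0 <;> simp only [binarySign, h0, if_true, if_false] at hcard <;>
    push_cast at hcard ⊢ <;> linarith

theorem exists_two_pow_mul_coordDiff_eq_two_mul_sub (hF : Fintype.card F = 2) {k a b : ℕ}
    (hk : 2 ≤ k) (φ : U →ₗ[F] V)
    (hS : projWeightChanges φ = Multiset.replicate (2 ^ k - 2) (a : ℤ) + {(b : ℤ)}) :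
    ∃ f ≠ 0, 2 ^ (k - 1) * coordDiff φ f = 2 * (a : ℤ) - b := by
  obtain ⟨u₀, hu₀⟩ := exists_two_pow_mul_coordDiff_eq hF (by omega) φ hS
  have hcard : Nat.card F < Nat.card U := by
    rw [card_eq_two_pow_of_projWeightChanges_eq hF (by omega) φ hS, Nat.card_eq_fintype_card, hF]
    calc 2 < 2 ^ 2 := by norm_num
      _ ≤ 2 ^ k := Nat.pow_le_pow_right two_pos hk
  obtain ⟨f, hf, hfu₀⟩ := exists_ne_zero_apply_eq_zero hcard u₀
  exact ⟨f, hf, by rw [hu₀ f hf, if_pos hfu₀]⟩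

theorem isProjection_iff_le (hF : Fintype.card F = 2) {k a b : ℕ} (hk : 2 ≤ k)
    (φ : U →ₗ[F] V)
    (hS : projWeightChanges φ = Multiset.replicate (2 ^ k - 2) (a : ℤ) + {(b : ℤ)}) :
    IsProjection φ ↔ b ≤ 2 * a := by
  have hpow : (0 : ℤ) < 2 ^ (k - 1) := by positivity
  rw [isProjection_iff_forall_coordDiff_nonneg hF]
  constructor
  · intro hφ
    obtain ⟨f, hf, hfD⟩ := exists_two_pow_mul_coordDiff_eq_two_mul_sub hF hk φ hS
    have := mul_nonneg hpow.le (hφ f hf)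
    omega
  · intro hba f hf
    obtain ⟨u₀, hu₀⟩ := exists_two_pow_mul_coordDiff_eq hF (by omega) φ hS
    refine nonneg_of_mul_nonneg_right ?_ hpow
    rw [hu₀ f hf]
    split_ifs <;> omega

theorem two_pow_dvd_two_mul_sub (hF : Fintype.card F = 2) {k a b : ℕ} (hk : 2 ≤ k)
    (φ : U →ₗ[F] V)
    (hS : projWeightChanges φ = Multiset.replicate (2 ^ k - 2) (a : ℤ) + {(b : ℤ)}) :
    (2 : ℤ) ^ (k - 1) ∣ 2 * a - b := by
  obtain ⟨f, -, hfD⟩ := exists_two_pow_mul_coordDiff_eq_two_mul_sub hF hk φ hS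
  exact ⟨_, hfD.symm⟩

end Realization

end WeightChange

open WeightChange

/-- for `S` consisting of `2^k - 2` copies of `a` and one copy of `b`,
realized by some F₂-linear map, TFAE: (1) S is 2-projection-forcing; (2) b ≤ 2a;
(3) b < 2a + 2^(k-1). -/
theorem stmt_8 (a b k : ℕ) (hk : 2 ≤ k)
    (hreal : Realizes (ZMod 2) (Multiset.replicate (2 ^ k - 2) (a : ℤ) + {(b : ℤ)})) :
    (ProjectionForcing 2 (Multiset.replicate (2 ^ k - 2) (a : ℤ) + {(b : ℤ)}) ↔ b ≤ 2 * a) ∧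
      (b ≤ 2 * a ↔ b < 2 * a + 2 ^ (k - 1)) := by
  obtain ⟨n, m, U, V, φ, hφ⟩ := hreal
  have hF : Fintype.card (ZMod 2) = 2 := ZMod.card 2
  refine ⟨⟨fun hforcing => (isProjection_iff_le hF hk φ hφ).mp (hforcing _ hF _ _ _ _ φ hφ),
    fun hba F _ _ _ hF' _ _ _ _ φ' hφ' => (isProjection_iff_le hF' hk φ' hφ').mpr hba⟩, ?_⟩
  exact_mod_cast le_iff_lt_add_of_dvd_sub (by positivity) (two_pow_dvd_two_mul_sub hF hk φ hφ)
end

section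
/- The multiset S = {2, 2, 2, 2, 4, 4, 4} is realized by an F_2-linear projection but is not 2-projection-forcing. Specifically: let V_1 ⊆ F_2^7 be the span of {(1,1,1,1,0,0,0), (1,1,0,0,1,1,0), (1,0,1,0,1,0,1)}, let V_2 ⊆ F_2^7 be the span of {(1,1,1,1,0,0,0), (1,1,1,0,1,0,0), (1,1,0,0,0,1,1)}, and let W = {(0,0),(1,1)} ⊆ F_2^2. The map φ_1 : V_1 → W sending v to (v_1, v_1) (two copies of the first coordinate) and the map φ_2 : V_2 → W sending v to (v_1, v_2) both have projective multiset of weight changes equal to {2,2,2,2,4,4,4}; φ_2 is a projection, while φ_1 is not a projection. -/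
open Matrix

/-- The code `V₁ ⊆ F₂⁷` of Example 1. -/
def V₁ : Submodule (ZMod 2) (Fin 7 → ZMod 2) :=
  Submodule.span (ZMod 2) {![1,1,1,1,0,0,0], ![1,1,0,0,1,1,0], ![1,0,1,0,1,0,1]}

/-- The code `V₂ ⊆ F₂⁷` of Example 1. -/
def V₂ : Submodule (ZMod 2) (Fin 7 → ZMod 2) :=
  Submodule.span (ZMod 2) {![1,1,1,1,0,0,0], ![1,1,1,0,1,0,0], ![1,1,0,0,0,1,1]}

/-- The code `W = {(0,0),(1,1)} ⊆ F₂²` of Example 1. -/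
def W : Submodule (ZMod 2) (Fin 2 → ZMod 2) :=
  Submodule.span (ZMod 2) {![1,1]}

/-!
Both codes are 3-dimensional, so the weight changes are found by running through their seven
nonzero codewords. `φ₂` keeps coordinates `0` and `1`, hence is a projection. `φ₁` is not: each
row of a matrix realizing it must read off coordinate `0` of `V₁`; a row with a single nonzero
entry can only do so from column `0`, because no other coordinate of `V₁` is a multiple of
coordinate `0`. Then column `0` has two nonzero entries.
-/

namespace Projectivization

variable {K V : Type*} [DivisionRing K] [Subsingleton Kˣ] [AddCommGroup V] [Module K V]

theorem rep_mk_of_subsingleton_units (v : V) (hv : v ≠ 0) : (mk K v hv).rep = v := by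
  obtain ⟨a, ha⟩ := (mk_eq_mk_iff K _ _ (rep_nonzero (mk K v hv)) hv).1 (mk_rep _)
  rw [← ha, Subsingleton.elim a 1, one_smul]

noncomputable def equivNonzeroOfSubsingletonUnits : {v : V // v ≠ 0} ≃ Projectivization K V where
  toFun v := mk K v.1 v.2
  invFun p := ⟨p.rep, p.rep_nonzero⟩
  left_inv v := Subtype.ext (rep_mk_of_subsingleton_units v.1 v.2)
  right_inv p := p.mk_rep

end Projectivization

theorem projWeightChanges_eq_map_nonzero {F : Type} [Field F] [Fintype F] [DecidableEq F]
    [Subsingleton Fˣ] {n m : ℕ} {U : Submodule F (Fin n → F)} {V : Submodule F (Fin m → F)}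
    (φ : U →ₗ[F] V) {M : Type*} [AddCommGroup M] [Module F M] [Fintype M] [DecidableEq M]
    (T : M →ₗ[F] Fin n → F) (hT : Function.Injective T) (hTU : LinearMap.range T = U) :
    projWeightChanges φ = (Finset.univ : Finset {x : M // x ≠ 0}).val.map fun x =>
      (hammingNorm (T x.1) : ℤ) -
        hammingNorm (φ ⟨T x.1, hTU ▸ LinearMap.mem_range_self T x.1⟩ : Fin m → F) := by
  let e : M ≃ U := .ofBijective (fun x => ⟨T x, hTU ▸ LinearMap.mem_range_self T x⟩)
    ⟨fun x y hxy => hT (congrArg Subtype.val hxy),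
     fun u => (hTU ▸ u.2 : (u : Fin n → F) ∈ LinearMap.range T).imp fun _ => Subtype.ext⟩
  have he : ∀ x, x ≠ 0 ↔ e x ≠ 0 := fun x => by
    rw [ne_eq, ne_eq, ← map_eq_zero_iff T hT, ← ZeroMemClass.coe_eq_zero]
    rfl
  rw [projWeightChanges, ← Multiset.map_univ_val_equiv
    ((e.subtypeEquiv he).trans Projectivization.equivNonzeroOfSubsingletonUnits), Multiset.map_map]
  refine Multiset.map_congr rfl fun x _ => ?_
  simp only [Function.comp_apply, Equiv.trans_apply, Equiv.subtypeEquiv_apply]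
  rw [Projectivization.equivNonzeroOfSubsingletonUnits, Equiv.coe_fn_mk,
    Projectivization.rep_mk_of_subsingleton_units]
  rfl

theorem Matrix.dotProduct_eq_mul_of_subsingleton_support {R n : Type*} [Fintype n]
    [NonUnitalNonAssocSemiring R] {r : n → R} (hr : ∀ j j', r j ≠ 0 → r j' ≠ 0 → j = j')
    {k : n} (hk : r k ≠ 0) (v : n → R) : r ⬝ᵥ v = r k * v k :=
  Finset.sum_eq_single k (fun j _ hjk => by
    rw [not_not.1 fun hj => hjk (hr j k hj hk), zero_mul]) (by simp)

theorem isProjection_restrict_funLeft {F : Type} [Field F] [Fintype F] [DecidableEq F] {n m : ℕ}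
    {U : Submodule F (Fin n → F)} {V : Submodule F (Fin m → F)} {σ : Fin m → Fin n}
    (hσ : Function.Injective σ) (hUV : ∀ u ∈ U, LinearMap.funLeft F F σ u ∈ V) :
    IsProjection ((LinearMap.funLeft F F σ).restrict hUV) := by
  refine ⟨.of fun i j => if σ i = j then 1 else 0, fun u => ?_, fun i j j' hj hj' => ?_,
    fun i i' j hi hi' => ?_⟩
  · ext i
    simp [mulVec, dotProduct, LinearMap.funLeft_apply]
  · simp only [of_apply, ne_eq, ite_eq_right_iff, one_ne_zero, imp_false, not_not] at hj hj'
    exact hj.symm.trans hj'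
  · simp only [of_apply, ne_eq, ite_eq_right_iff, one_ne_zero, imp_false, not_not] at hi hi'
    exact hσ (hi.trans hi'.symm)

section NotProjection

variable {F : Type} [Field F] {n : ℕ} {U : Submodule F (Fin n → F)}

theorem ne_zero_of_dotProduct_eq_coord {r : Fin n → F}
    (hr : ∀ k k', r k ≠ 0 → r k' ≠ 0 → k = k') {j : Fin n}
    (hrj : ∀ u : U, r ⬝ᵥ (u : Fin n → F) = (u : Fin n → F) j)
    (hj : ∃ u : U, (u : Fin n → F) j ≠ 0)
    (hsep : ∀ k (c : F), (∀ u : U, c * (u : Fin n → F) k = (u : Fin n → F) j) → k = j) :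
    r j ≠ 0 := by
  obtain ⟨u, hu⟩ := hj
  obtain ⟨k, -, hk⟩ := Finset.exists_ne_zero_of_sum_ne_zero ((hrj u).trans_ne hu)
  have hrk : r k ≠ 0 := left_ne_zero_of_mul hk
  have hkj : k = j := hsep k (r k) fun u' => by
    rw [← dotProduct_eq_mul_of_subsingleton_support hr hrk, hrj]
  exact hkj ▸ hrk

theorem not_isProjection_of_duplicate_coord [Fintype F] [DecidableEq F] {m : ℕ}
    {V : Submodule F (Fin m → F)} (φ : U →ₗ[F] V) {i i' : Fin m} (hii' : i ≠ i') {j : Fin n}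
    (hi : ∀ u : U, (φ u : Fin m → F) i = (u : Fin n → F) j)
    (hi' : ∀ u : U, (φ u : Fin m → F) i' = (u : Fin n → F) j)
    (hj : ∃ u : U, (u : Fin n → F) j ≠ 0)
    (hsep : ∀ k (c : F), (∀ u : U, c * (u : Fin n → F) k = (u : Fin n → F) j) → k = j) :
    ¬ IsProjection φ := by
  rintro ⟨M, hM, hrow, hcol⟩
  have hcolj : ∀ l, (∀ u : U, (φ u : Fin m → F) l = (u : Fin n → F) j) → M l j ≠ 0 :=
    fun l hl => ne_zero_of_dotProduct_eq_coord (hrow l)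
      (fun u => (congrFun (hM u) l).symm.trans (hl u)) hj hsep
  exact hii' (hcol i i' j (hcolj i hi) (hcolj i' hi'))

end NotProjection

def G₁ : Matrix (Fin 3) (Fin 7) (ZMod 2) :=
  ![![1,1,1,1,0,0,0], ![1,1,0,0,1,1,0], ![1,0,1,0,1,0,1]]

def G₂ : Matrix (Fin 3) (Fin 7) (ZMod 2) :=
  ![![1,1,1,1,0,0,0], ![1,1,1,0,1,0,0], ![1,1,0,0,0,1,1]]

theorem range_vecMulLinear_G₁ : LinearMap.range G₁.vecMulLinear = V₁ := by
  rw [range_vecMulLinear, V₁]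
  congr 1
  exact (range_cons _ _).trans (by rw [range_cons, range_cons_empty]; rfl)

theorem range_vecMulLinear_G₂ : LinearMap.range G₂.vecMulLinear = V₂ := by
  rw [range_vecMulLinear, V₂]
  congr 1
  exact (range_cons _ _).trans (by rw [range_cons, range_cons_empty]; rfl)

theorem injective_vecMulLinear_G₁ : Function.Injective G₁.vecMulLinear :=
  (injective_iff_map_eq_zero _).2 (by decide)

theorem injective_vecMulLinear_G₂ : Function.Injective G₂.vecMulLinear :=
  (injective_iff_map_eq_zero _).2 (by decide)

theorem mem_W_iff {x : Fin 2 → ZMod 2} : x ∈ W ↔ x 0 = x 1 := by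
  rw [W, Submodule.mem_span_singleton]
  refine ⟨fun ⟨a, ha⟩ => by simp [← ha], fun h => ⟨x 0, ?_⟩⟩
  ext i
  fin_cases i <;> simp [h]

theorem V₂_apply_zero_eq_apply_one {v : Fin 7 → ZMod 2} (hv : v ∈ V₂) : v 0 = v 1 := by
  rw [← range_vecMulLinear_G₂] at hv
  obtain ⟨x, rfl⟩ := hv
  revert x
  decide

def phi₁ : V₁ →ₗ[ZMod 2] W :=
  (LinearMap.funLeft (ZMod 2) (ZMod 2) fun _ => 0).restrict fun _ _ => mem_W_iff.2 rfl

def phi₂ : V₂ →ₗ[ZMod 2] W :=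
  (LinearMap.funLeft (ZMod 2) (ZMod 2) (Fin.castLE (by norm_num : 2 ≤ 7))).restrict fun _ hv =>
    mem_W_iff.2 (V₂_apply_zero_eq_apply_one hv)

theorem projWeightChanges_phi₁ : projWeightChanges phi₁ = {2,2,2,2,4,4,4} := by
  rw [projWeightChanges_eq_map_nonzero phi₁ _ injective_vecMulLinear_G₁ range_vecMulLinear_G₁]
  decide

theorem projWeightChanges_phi₂ : projWeightChanges phi₂ = {2,2,2,2,4,4,4} := by
  rw [projWeightChanges_eq_map_nonzero phi₂ _ injective_vecMulLinear_G₂ range_vecMulLinear_G₂]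
  decide

theorem isProjection_phi₂ : IsProjection phi₂ :=
  isProjection_restrict_funLeft (Fin.castLE_injective _) _

theorem not_isProjection_phi₁ : ¬ IsProjection phi₁ := by
  have hrows : ∀ i, G₁ i ∈ V₁ := fun i => by
    rw [← range_vecMulLinear_G₁, range_vecMulLinear]
    exact Submodule.subset_span ⟨i, rfl⟩
  refine not_isProjection_of_duplicate_coord phi₁ (i := 0) (i' := 1) (j := 0) zero_ne_one
    (fun _ => rfl) (fun _ => rfl) ⟨⟨G₁ 0, hrows 0⟩, one_ne_zero⟩ fun k c hk => ?_
  -- every column of `G₁` other than column `0` has a `0` where column `0` has a `1`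
  have key : ∀ k : Fin 7, ∀ c : ZMod 2, (∀ i, c * G₁ i k = G₁ i 0) → k = 0 := by decide
  exact key k c fun i => hk ⟨G₁ i, hrows i⟩

/-- `S = {2,2,2,2,4,4,4}` is realized both by the non-projection
`φ₁ : V₁ → W, v ↦ (v₁, v₁)` and by the projection `φ₂ : V₂ → W, v ↦ (v₁, v₂)`;
hence `S` is realized by a projection but is not 2-projection-forcing. -/
theorem stmt_15 :
    ∃ (φ₁ : V₁ →ₗ[ZMod 2] W) (φ₂ : V₂ →ₗ[ZMod 2] W),
      (∀ v : V₁, ((φ₁ v : W) : Fin 2 → ZMod 2) =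
        ![(v : Fin 7 → ZMod 2) 0, (v : Fin 7 → ZMod 2) 0]) ∧
      (∀ v : V₂, ((φ₂ v : W) : Fin 2 → ZMod 2) =
        ![(v : Fin 7 → ZMod 2) 0, (v : Fin 7 → ZMod 2) 1]) ∧
      projWeightChanges φ₁ = ({2,2,2,2,4,4,4} : Multiset ℤ) ∧
      projWeightChanges φ₂ = ({2,2,2,2,4,4,4} : Multiset ℤ) ∧
      IsProjection φ₂ ∧
      ¬ IsProjection φ₁ ∧
      ¬ ProjectionForcing 2 ({2,2,2,2,4,4,4} : Multiset ℤ) := by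
  refine ⟨phi₁, phi₂, fun v => ?_, fun v => ?_, projWeightChanges_phi₁, projWeightChanges_phi₂,
    isProjection_phi₂, not_isProjection_phi₁, fun hforcing => not_isProjection_phi₁ ?_⟩
  · ext i
    fin_cases i <;> rfl
  · ext i
    fin_cases i <;> rfl
  · exact hforcing (ZMod 2) (ZMod.card 2) _ _ _ _ _ projWeightChanges_phi₁
end
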